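/- arXiv:1608.08348 — 7 statements merged into one kernel-verified Lean document; each statement's English description precedes it below -/
import Mathlib

section
/- Suppose the trapping ball assumption holds with constants R > 0 and δ > 0. Then for every v₀ ∈ B_R there exists a differentiable function v : [0,∞) → ℝ^d with v(0) = v₀ and v'(t) = F(v(t)) for all t ≥ 0; moreover, every differentiable v : [0,T) → ℝ^d (with 0 < T ≤ ∞) satisfying v(0) ∈ B_R and v'(t) = F(v(t)) for all t ∈ [0,T) satisfies ‖v(t)‖ ≤ R for all t ∈ [0,T). -/
/-!
Invariance: while `‖v t‖` lies in the shell `[R, R + δ]`, the trapping condition makes `‖v t‖ ^ 2`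
nonincreasing, so a solution starting in `B_R` cannot cross the shell outwards.

Existence: multiplying `F` by a smooth bump function equal to `1` on `B_R` gives a compactly
supported `C¹`, hence globally Lipschitz and bounded, vector field that still satisfies the trapping
condition. Picard–Lindelöf on every `[0, T]` together with uniqueness gives a solution on `[0, ∞)`;
by invariance it stays in `B_R`, where the two vector fields agree.
-/

open Set Filter
open scoped Topology ENNReal NNReal RealInnerProductSpace

theorem HasDerivWithinAt.Ici_of_Icc_subset {F : Type*} [NormedAddCommGroup F] [NormedSpace ℝ F]
    {f : ℝ → F} {f' : F} {s : Set ℝ} {t b : ℝ} (h : HasDerivWithinAt f f' s t) (htb : t < b)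
    (hs : Icc t b ⊆ s) : HasDerivWithinAt f f' (Ici t) t :=
  h.mono_of_mem_nhdsWithin (mem_of_superset (Icc_mem_nhdsGE htb) hs)

theorem slope_max_min_lt {φ : ℝ → ℝ} {m M x z r : ℝ} (hxz : x < z) (hr : 0 < r)
    (hslope : slope φ x z < r) : slope (fun y ↦ max m (min (φ y) M)) x z < r := by
  rw [slope_def_field, div_lt_iff₀ (sub_pos.2 hxz)] at hslope ⊢
  have : 0 < r * (z - x) := mul_pos hr (sub_pos.2 hxz)
  simp only [max_def, min_def]
  split_ifs <;> linarith

theorem image_le_of_deriv_right_nonpos_on_band {φ φ' : ℝ → ℝ} {a b m M : ℝ} (hmM : m < M)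
    (hφ : ContinuousOn φ (Icc a b))
    (hφ' : ∀ x ∈ Ico a b, φ x ∈ Icc m M → HasDerivWithinAt φ (φ' x) (Ici x) x)
    (hφ'_nonpos : ∀ x ∈ Ico a b, φ x ∈ Icc m M → φ' x ≤ 0)
    (ha : φ a ≤ m) : ∀ ⦃x⦄, x ∈ Icc a b → φ x ≤ m := by
  -- The clamped function `ψ` has nonpositive upper right Dini derivative everywhere: it is
  -- locally constant off the band and moves no faster upwards than `φ` inside it.
  set ψ : ℝ → ℝ := fun y ↦ max m (min (φ y) M)
  have hψ_le : ∀ ⦃x⦄, x ∈ Icc a b → ψ x ≤ m := by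
    refine image_le_of_liminf_slope_right_le_deriv_boundary (B' := fun _ ↦ 0)
      ((continuous_const.max (continuous_id.min continuous_const)).comp_continuousOn hφ)
      (by simp [ha]) continuousOn_const (fun x _ ↦ hasDerivWithinAt_const _ _ _)
      fun x hx r hr ↦ ?_
    have hφ_cont : Tendsto φ (𝓝[>] x) (𝓝 (φ x)) :=
      (hφ x (Ico_subset_Icc_self hx)).mono_of_mem_nhdsWithin <| mem_of_superset
        (Ioo_mem_nhdsGT hx.2) (Ioo_subset_Icc_self.trans (Icc_subset_Icc_left hx.1))
    have h_const : ∀ c, (∀ᶠ z in 𝓝[>] x, ψ z = c) → ψ x = c →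
        ∃ᶠ z in 𝓝[>] x, slope ψ x z < r :=
      fun c hz hxc ↦ (hz.mono fun z hz ↦ by simpa [slope_def_field, hz, hxc] using hr).frequently
    have below {y} (hy : φ y < m) : ψ y = m := max_eq_left ((min_le_left _ _).trans hy.le)
    have above {y} (hy : M < φ y) : ψ y = M := by
      simp only [ψ, min_eq_right hy.le, max_eq_right hmM.le]
    rcases lt_or_ge (φ x) m with hlt | hm
    · exact h_const m ((hφ_cont.eventually (gt_mem_nhds hlt)).mono fun z ↦ below) (below hlt)
    rcases le_or_gt (φ x) M with hM | hgt
    · exact ((hφ' x hx ⟨hm, hM⟩).liminf_right_slope_le ((hφ'_nonpos x hx ⟨hm, hM⟩).trans_lt hr)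
        |>.and_eventually self_mem_nhdsWithin).mono fun z hz ↦ slope_max_min_lt hz.2 hr hz.1
    · exact h_const M ((hφ_cont.eventually (lt_mem_nhds hgt)).mono fun z ↦ above) (above hgt)
  intro x hx
  by_contra! h
  exact absurd (hψ_le hx) (not_le.2 (lt_max_of_lt_right (lt_min h hmM)))

section Invariance

variable {E : Type*} [NormedAddCommGroup E] [InnerProductSpace ℝ E]

theorem norm_le_of_inner_nonpos_on_shell {G : E → E} {R δ : ℝ} (hR : 0 < R) (hδ : 0 < δ)
    (htrap : ∀ x, ‖x‖ ∈ Icc R (R + δ) → ⟪G x, x⟫ ≤ 0) {v : ℝ → E} {a b : ℝ} {s : Set ℝ}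
    (hs : Icc a b ⊆ s) (hv : ∀ t ∈ Icc a b, HasDerivWithinAt v (G (v t)) s t)
    (ha : ‖v a‖ ≤ R) : ∀ ⦃t⦄, t ∈ Icc a b → ‖v t‖ ≤ R := by
  have sq_mem_iff : ∀ t, ‖v t‖ ^ 2 ∈ Icc (R ^ 2) ((R + δ) ^ 2) ↔ ‖v t‖ ∈ Icc R (R + δ) :=
    fun t ↦ and_congr (pow_le_pow_iff_left₀ hR.le (norm_nonneg _) two_ne_zero)
      (pow_le_pow_iff_left₀ (norm_nonneg _) (by positivity) two_ne_zero)
  intro t ht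
  refine (pow_le_pow_iff_left₀ (norm_nonneg _) hR.le two_ne_zero).1 <|
    image_le_of_deriv_right_nonpos_on_band (φ := (‖v ·‖ ^ 2)) (M := (R + δ) ^ 2)
      (pow_lt_pow_left₀ (by linarith) hR.le two_ne_zero)
      (fun t ht ↦ ((hv t ht).continuousWithinAt.mono hs).norm.pow 2)
      (fun t ht _ ↦ ((hv t (Ico_subset_Icc_self ht)).Ici_of_Icc_subset ht.2
        ((Icc_subset_Icc_left ht.1).trans hs)).norm_sq)
      (fun t ht hmem ↦ ?_) (pow_le_pow_left₀ (norm_nonneg _) ha 2) ht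
  have := htrap (v t) ((sq_mem_iff t).1 hmem)
  rw [real_inner_comm] at this
  linarith

end Invariance

section GlobalExistence

variable {E : Type*} [NormedAddCommGroup E] [NormedSpace ℝ E] [CompleteSpace E]

theorem exists_forall_mem_Icc_hasDerivWithinAt_of_lipschitzWith {G : E → E} {K C : ℝ≥0}
    (hG : LipschitzWith K G) (hC : ∀ x, ‖G x‖ ≤ C) (x₀ : E) {T : ℝ} (hT : 0 ≤ T) :
    ∃ v : ℝ → E, v 0 = x₀ ∧ ∀ t ∈ Icc 0 T, HasDerivWithinAt v (G (v t)) (Icc 0 T) t :=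
  IsPicardLindelof.exists_eq_forall_mem_Icc_hasDerivWithinAt₀ <|
    IsPicardLindelof.of_time_independent (t₀ := ⟨0, le_rfl, hT⟩) (a := C * T.toNNReal)
      (fun x _ ↦ hC x) hG.lipschitzOnWith (by simp [hT])

theorem exists_forall_hasDerivWithinAt_Ici_of_lipschitzWith {G : E → E} {K C : ℝ≥0}
    (hG : LipschitzWith K G) (hC : ∀ x, ‖G x‖ ≤ C) (x₀ : E) :
    ∃ v : ℝ → E, v 0 = x₀ ∧ ∀ t ∈ Ici (0 : ℝ), HasDerivWithinAt v (G (v t)) (Ici 0) t := by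
  choose! w hw₀ hw using fun T (hT : 0 ≤ T) ↦
    exists_forall_mem_Icc_hasDerivWithinAt_of_lipschitzWith hG hC x₀ hT
  have hw_eq : ∀ T T', 0 ≤ T → 0 ≤ T' → EqOn (w T) (w T') (Icc 0 (min T T')) := by
    intro T T' hT hT'
    have restrict : ∀ S, 0 ≤ S → min T T' ≤ S → ContinuousOn (w S) (Icc 0 (min T T')) ∧
        ∀ t ∈ Ico 0 (min T T'), HasDerivWithinAt (w S) (G (w S t)) (Ici t) t := by
      intro S hS hle
      have hsub : Icc 0 (min T T') ⊆ Icc 0 S := Icc_subset_Icc_right hle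
      refine ⟨fun t ht ↦ (hw S hS t (hsub ht)).continuousWithinAt.mono hsub, fun t ht ↦ ?_⟩
      exact (hw S hS t (hsub (Ico_subset_Icc_self ht))).Ici_of_Icc_subset
        (ht.2.trans_le hle) (Icc_subset_Icc_left ht.1)
    obtain ⟨hcont, hderiv⟩ := restrict T hT (min_le_left _ _)
    obtain ⟨hcont', hderiv'⟩ := restrict T' hT' (min_le_right _ _)
    exact ODE_solution_unique (v := fun _ ↦ G) (fun _ ↦ hG) hcont hderiv hcont' hderiv'
      ((hw₀ T hT).trans (hw₀ T' hT').symm)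
  refine ⟨fun t ↦ w (t + 1) t, by simpa using hw₀ 1 zero_le_one, fun t (ht : 0 ≤ t) ↦ ?_⟩
  have hnhds : Icc 0 (t + 1) ∈ 𝓝[Ici 0] t :=
    mem_nhdsWithin.2 ⟨Iio (t + 1), isOpen_Iio, by simp, fun x hx ↦ ⟨hx.2, hx.1.le⟩⟩
  have h_eq : ∀ x ∈ Icc 0 (t + 1), w (x + 1) x = w (t + 1) x := fun x hx ↦
    hw_eq _ _ (by linarith [hx.1]) (by linarith) ⟨hx.1, le_min (by linarith) hx.2⟩
  exact ((hw (t + 1) (by linarith) t ⟨ht, by linarith⟩).mono_of_mem_nhdsWithin hnhds)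
    |>.congr_of_eventuallyEq (eventually_of_mem hnhds h_eq) (h_eq t ⟨ht, by linarith⟩)

end GlobalExistence

section TrappedExistence

variable {E : Type*} [NormedAddCommGroup E] [InnerProductSpace ℝ E] [FiniteDimensional ℝ E]

theorem exists_forall_hasDerivWithinAt_Ici_of_inner_nonpos_on_shell {F : E → E}
    (hF : ContDiff ℝ 1 F) {R δ : ℝ} (hR : 0 < R) (hδ : 0 < δ)
    (htrap : ∀ x, ‖x‖ ∈ Icc R (R + δ) → ⟪F x, x⟫ ≤ 0) {x₀ : E} (hx₀ : ‖x₀‖ ≤ R) :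
    ∃ v : ℝ → E, v 0 = x₀ ∧ ∀ t ∈ Ici (0 : ℝ), HasDerivWithinAt v (F (v t)) (Ici 0) t := by
  let χ : ContDiffBump (0 : E) := ⟨R, R + 1, hR, by linarith⟩
  set G : E → E := fun x ↦ χ x • F x
  have hG_smooth : ContDiff ℝ 1 G := χ.contDiff.smul hF
  have hG_supp : HasCompactSupport G := χ.hasCompactSupport.smul_right
  obtain ⟨K, hK⟩ := hG_smooth.lipschitzWith_of_hasCompactSupport hG_supp one_ne_zero
  obtain ⟨C, hC⟩ := hG_supp.exists_bound_of_continuous hG_smooth.continuous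
  have hG_trap : ∀ x, ‖x‖ ∈ Icc R (R + δ) → ⟪G x, x⟫ ≤ 0 := fun x hx ↦ by
    simpa [G, real_inner_smul_left] using mul_nonpos_of_nonneg_of_nonpos χ.nonneg (htrap x hx)
  obtain ⟨v, hv₀, hv⟩ := exists_forall_hasDerivWithinAt_Ici_of_lipschitzWith hK
    (C := C.toNNReal) (fun x ↦ (hC x).trans (Real.le_coe_toNNReal C)) x₀
  refine ⟨v, hv₀, fun t (ht : 0 ≤ t) ↦ ?_⟩
  have hv_ball : ‖v t‖ ≤ R := norm_le_of_inner_nonpos_on_shell hR hδ hG_trap Icc_subset_Ici_self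
    (fun s hs ↦ hv s hs.1) (hv₀ ▸ hx₀) ⟨ht, le_rfl⟩
  simpa [G, χ.one_of_mem_closedBall (mem_closedBall_zero_iff.2 hv_ball)] using hv t ht

end TrappedExistence

/-- Under the trapping ball assumption, solutions of the ODE
`dv/dt = F(v) = -A v - B(v,v) + f` started in the ball `B_R` exist for all
positive times, and any solution started in `B_R` stays in `B_R`. -/
theorem trapping_ball_existence_and_invariance {d : ℕ}
    (A : EuclideanSpace ℝ (Fin d) →L[ℝ] EuclideanSpace ℝ (Fin d))
    (B : EuclideanSpace ℝ (Fin d) →L[ℝ] EuclideanSpace ℝ (Fin d) →L[ℝ] EuclideanSpace ℝ (Fin d))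
    (f : EuclideanSpace ℝ (Fin d))
    (F : EuclideanSpace ℝ (Fin d) → EuclideanSpace ℝ (Fin d))
    (hF : ∀ v, F v = f - A v - B v v)
    (R δ : ℝ) (hR : 0 < R) (hδ : 0 < δ)
    (htrap : ∀ v : EuclideanSpace ℝ (Fin d),
      ‖v‖ ∈ Icc R (R + δ) → (inner ℝ (F v) v : ℝ) ≤ 0) :
    (∀ v₀ : EuclideanSpace ℝ (Fin d), ‖v₀‖ ≤ R →
      ∃ v : ℝ → EuclideanSpace ℝ (Fin d), v 0 = v₀ ∧
        ∀ t ∈ Ici (0 : ℝ), HasDerivWithinAt v (F (v t)) (Ici 0) t) ∧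
    (∀ T : ℝ≥0∞, 0 < T → ∀ v : ℝ → EuclideanSpace ℝ (Fin d),
      ‖v 0‖ ≤ R →
      (∀ t : ℝ, 0 ≤ t → ENNReal.ofReal t < T →
        HasDerivWithinAt v (F (v t)) {s : ℝ | 0 ≤ s ∧ ENNReal.ofReal s < T} t) →
      ∀ t : ℝ, 0 ≤ t → ENNReal.ofReal t < T → ‖v t‖ ≤ R) := by
  have hF_smooth : ContDiff ℝ 1 F := by
    rw [show F = fun v ↦ f - A v - B v v from funext hF]
    fun_prop
  refine ⟨fun v₀ hv₀ ↦ exists_forall_hasDerivWithinAt_Ici_of_inner_nonpos_on_shell hF_smooth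
    hR hδ htrap hv₀, fun T _ v hv₀ hv t ht htT ↦ ?_⟩
  have hsub : Icc 0 t ⊆ {s : ℝ | 0 ≤ s ∧ ENNReal.ofReal s < T} :=
    fun s hs ↦ ⟨hs.1, (ENNReal.ofReal_le_ofReal hs.2).trans_lt htT⟩
  exact norm_le_of_inner_nonpos_on_shell hR hδ htrap hsub
    (fun s hs ↦ hv s (hsub hs).1 (hsub hs).2) hv₀ ⟨ht, le_rfl⟩
end

section
/- Suppose ‖A‖ > 0. Let C₀ := R + ‖f‖/‖A‖ and C_der := ‖A‖ + ‖B‖R + ‖B‖‖f‖/‖A‖. Then for every integer i ≥ 0 and every v ∈ B_R, ‖D^i v‖ ≤ C₀ · C_der^i · i!. -/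
set_option maxHeartbeats 800000


noncomputable section

/-- The formal time derivatives `D^i v` of a solution of
`dv/dt = -A v - B(v,v) + f` at time `0`, defined recursively by
`D⁰v = v`, `D¹v = F(v) = f - A v - B(v,v)` and, for `i ≥ 2`,
`D^i v = -A (D^{i-1} v) - ∑_{j=0}^{i-1} C(i-1,j) B(D^j v, D^{i-1-j} v)`. -/
def formalDeriv {E : Type*} [AddCommGroup E] [Module ℝ E]
    (A : E → E) (B : E → E → E) (f : E) : ℕ → E → E
  | 0, v => v
  | 1, v => f - A v - B v v
  | (i + 2), v =>
      -(A (formalDeriv A B f (i + 1) v)) -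
        ∑ j ∈ (Finset.range (i + 2)).attach,
          ((i + 1).choose j.1 : ℝ) •
            B (formalDeriv A B f j.1 v) (formalDeriv A B f (i + 1 - j.1) v)
  termination_by i _ => i
  decreasing_by
  · omega
  · have := Finset.mem_range.mp j.2; omega
  · have := Finset.mem_range.mp j.2; omega


lemma formalDeriv_succ_succ {E : Type*} [AddCommGroup E] [Module ℝ E]
    (A : E → E) (B : E → E → E) (f : E) (i : ℕ) (v : E) :
    formalDeriv A B f (i + 2) v =
      -(A (formalDeriv A B f (i + 1) v)) -
        ∑ j ∈ (Finset.range (i + 2)).attach,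
          ((i + 1).choose j.1 : ℝ) •
            B (formalDeriv A B f j.1 v) (formalDeriv A B f (i + 1 - j.1) v) := by
  rw [formalDeriv]

lemma formalDeriv_zero {E : Type*} [AddCommGroup E] [Module ℝ E]
    (A : E → E) (B : E → E → E) (f : E) (v : E) :
    formalDeriv A B f 0 v = v := by rw [formalDeriv]

lemma formalDeriv_one {E : Type*} [AddCommGroup E] [Module ℝ E]
    (A : E → E) (B : E → E → E) (f : E) (v : E) :
    formalDeriv A B f 1 v = f - A v - B v v := by rw [formalDeriv]

/-- with `C₀ = R + ‖f‖/‖A‖` and `C_der = ‖A‖ + ‖B‖R + ‖B‖‖f‖/‖A‖`,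
one has `‖D^i v‖ ≤ C₀ · C_der^i · i!` for all `i ∈ ℕ` and `v ∈ B_R`. -/
theorem formalDeriv_norm_bound {d : ℕ}
    (A : EuclideanSpace ℝ (Fin d) →L[ℝ] EuclideanSpace ℝ (Fin d))
    (B : EuclideanSpace ℝ (Fin d) →L[ℝ] EuclideanSpace ℝ (Fin d) →L[ℝ] EuclideanSpace ℝ (Fin d))
    (f : EuclideanSpace ℝ (Fin d))
    (R : ℝ) (hR : 0 < R) (hA : 0 < ‖A‖) :
    ∀ i : ℕ, ∀ v : EuclideanSpace ℝ (Fin d), ‖v‖ ≤ R →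
      ‖formalDeriv (fun x => A x) (fun x y => B x y) f i v‖ ≤
        (R + ‖f‖ / ‖A‖) * (‖A‖ + ‖B‖ * R + ‖B‖ * ‖f‖ / ‖A‖) ^ i * (Nat.factorial i) := by
  
  set C0 := R + ‖f‖ / ‖A‖ with hC0def
  set C := ‖A‖ + ‖B‖ * R + ‖B‖ * ‖f‖ / ‖A‖ with hCdef
  set D := formalDeriv (fun x => A x) (fun x y => B x y) f with hD
  have hfA : 0 ≤ ‖f‖ / ‖A‖ := div_nonneg (norm_nonneg _) hA.le
  have hB0 : (0:ℝ) ≤ ‖B‖ := ContinuousLinearMap.opNorm_nonneg B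
  have hC0pos : 0 < C0 := by rw [hC0def]; linarith
  have hC : C = ‖A‖ + ‖B‖ * C0 := by rw [hCdef, hC0def]; ring
  have hCpos : 0 < C := by rw [hC]; nlinarith
  have hfmul : ‖f‖ / ‖A‖ * ‖A‖ = ‖f‖ := div_mul_cancel₀ _ hA.ne'
  intro i
  induction i using Nat.strong_induction_on with
  | _ i ih =>
    rcases i with _ | _ | i
    · intro v hv
      rw [hD, formalDeriv_zero]
      have : ‖v‖ ≤ C0 := by rw [hC0def]; linarith
      simpa using this
    · intro v hv
      rw [hD, formalDeriv_one]
      have h1 : ‖f - A v - B v v‖ ≤ ‖f‖ + ‖A‖ * R + ‖B‖ * R * R := by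
        have hA1 : ‖A v‖ ≤ ‖A‖ * R := by
          calc ‖A v‖ ≤ ‖A‖ * ‖v‖ := A.le_opNorm v
          _ ≤ ‖A‖ * R := by nlinarith
        have hB1 : ‖B v v‖ ≤ ‖B‖ * R * R := by
          calc ‖B v v‖ ≤ ‖B‖ * ‖v‖ * ‖v‖ := B.le_opNorm₂ v v
          _ ≤ ‖B‖ * R * R := by
              nlinarith [norm_nonneg v, mul_nonneg hB0 (norm_nonneg v),
                mul_le_mul hv hv (norm_nonneg v) hR.le]
        calc ‖f - A v - B v v‖
            ≤ ‖f - A v‖ + ‖B v v‖ := norm_sub_le _ _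
          _ ≤ ‖f‖ + ‖A v‖ + ‖B v v‖ := by linarith [norm_sub_le f (A v)]
          _ ≤ ‖f‖ + ‖A‖ * R + ‖B‖ * R * R := by linarith
      have h2 : ‖f‖ + ‖A‖ * R + ‖B‖ * R * R ≤ C0 * C := by
        rw [hC, hC0def]
        nlinarith [mul_nonneg (mul_nonneg hB0 hfA) hfA,
          mul_nonneg (mul_nonneg hB0 hfA) hR.le, hfmul]
      simpa using h1.trans h2
    · intro v hv
      have key : ∀ j ∈ (Finset.range (i + 2)).attach,
          ‖((i + 1).choose j.1 : ℝ) • B (D j.1 v) (D (i + 1 - j.1) v)‖ ≤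
          ‖B‖ * C0 * C0 * C ^ (i + 1) * (Nat.factorial (i + 1)) := by
        intro j _
        have hj : j.1 ≤ i + 1 := by have := Finset.mem_range.mp j.2; omega
        have h1 := ih j.1 (by omega) v hv
        have h2 := ih (i + 1 - j.1) (by omega) v hv
        have hb := B.le_opNorm₂ (D j.1 v) (D (i + 1 - j.1) v)
        have hn1 : (0:ℝ) ≤ ‖D j.1 v‖ := norm_nonneg _
        have hn2 : (0:ℝ) ≤ ‖D (i + 1 - j.1) v‖ := norm_nonneg _
        have hch : ((i + 1).choose j.1 : ℝ) * (Nat.factorial j.1) *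
            (Nat.factorial (i + 1 - j.1)) = (Nat.factorial (i + 1)) := by
          rw [← Nat.cast_mul, ← Nat.cast_mul, Nat.choose_mul_factorial_mul_factorial hj]
        have hcw : C ^ j.1 * C ^ (i + 1 - j.1) = C ^ (i + 1) := by
          rw [← pow_add]; congr 1; omega
        have hchpos : (0:ℝ) ≤ ((i + 1).choose j.1 : ℝ) := Nat.cast_nonneg _
        rw [norm_smul, Real.norm_eq_abs, abs_of_nonneg hchpos]
        calc ((i + 1).choose j.1 : ℝ) * ‖B (D j.1 v) (D (i + 1 - j.1) v)‖
            ≤ ((i + 1).choose j.1 : ℝ) * (‖B‖ *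
              (C0 * C ^ j.1 * (Nat.factorial j.1)) *
              (C0 * C ^ (i + 1 - j.1) * (Nat.factorial (i + 1 - j.1)))) := by
              apply mul_le_mul_of_nonneg_left _ hchpos
              calc ‖B (D j.1 v) (D (i + 1 - j.1) v)‖
                  ≤ ‖B‖ * ‖D j.1 v‖ * ‖D (i + 1 - j.1) v‖ := hb
                _ ≤ ‖B‖ * (C0 * C ^ j.1 * (Nat.factorial j.1)) *
                    (C0 * C ^ (i + 1 - j.1) * (Nat.factorial (i + 1 - j.1))) :=
                    mul_le_mul (mul_le_mul_of_nonneg_left h1 hB0) h2 hn2 (by positivity)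
          _ = ‖B‖ * C0 * C0 * (C ^ j.1 * C ^ (i + 1 - j.1)) *
              (((i + 1).choose j.1 : ℝ) * (Nat.factorial j.1) * (Nat.factorial (i + 1 - j.1))) := by
              ring
          _ = ‖B‖ * C0 * C0 * C ^ (i + 1) * (Nat.factorial (i + 1)) := by rw [hcw, hch]
      have hsum : ‖∑ j ∈ (Finset.range (i + 2)).attach,
          ((i + 1).choose j.1 : ℝ) • B (D j.1 v) (D (i + 1 - j.1) v)‖ ≤
          (i + 2 : ℝ) * (‖B‖ * C0 * C0 * C ^ (i + 1) * (Nat.factorial (i + 1))) := by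
        calc _ ≤ ∑ j ∈ (Finset.range (i + 2)).attach,
              ‖((i + 1).choose j.1 : ℝ) • B (D j.1 v) (D (i + 1 - j.1) v)‖ :=
              norm_sum_le _ _
          _ ≤ ∑ _j ∈ (Finset.range (i + 2)).attach,
              (‖B‖ * C0 * C0 * C ^ (i + 1) * (Nat.factorial (i + 1))) :=
              Finset.sum_le_sum key
          _ = (i + 2 : ℝ) * (‖B‖ * C0 * C0 * C ^ (i + 1) * (Nat.factorial (i + 1))) := by
              rw [Finset.sum_const, Finset.card_attach, Finset.card_range]
              push_cast; ring
      have hAterm : ‖A (D (i + 1) v)‖ ≤ ‖A‖ * (C0 * C ^ (i + 1) * (Nat.factorial (i + 1))) := by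
        calc ‖A (D (i + 1) v)‖ ≤ ‖A‖ * ‖D (i + 1) v‖ := A.le_opNorm _
          _ ≤ ‖A‖ * (C0 * C ^ (i + 1) * (Nat.factorial (i + 1))) :=
              mul_le_mul_of_nonneg_left (ih (i + 1) (by omega) v hv) hA.le
      have hfin : ‖A‖ * (C0 * C ^ (i + 1) * (Nat.factorial (i + 1))) +
          (i + 2 : ℝ) * (‖B‖ * C0 * C0 * C ^ (i + 1) * (Nat.factorial (i + 1))) ≤
          C0 * C ^ (i + 2) * (Nat.factorial (i + 2)) := by
        have hfact : ((Nat.factorial (i + 2)) : ℝ) = (i + 2 : ℝ) * (Nat.factorial (i + 1)) := by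
          rw [Nat.factorial_succ]; push_cast; ring
        rw [hfact, hC]
        have hCp : (0:ℝ) ≤ C ^ (i + 1) := by positivity
        have hfp : (0:ℝ) < ((Nat.factorial (i + 1)) : ℝ) := by positivity
        have hi2 : (1:ℝ) ≤ (i + 2 : ℝ) := by linarith [Nat.cast_nonneg (α := ℝ) i]
        have expand : C0 * (‖A‖ + ‖B‖ * C0) ^ (i + 2) * ((i + 2 : ℝ) * (Nat.factorial (i + 1)))
            = (i + 2 : ℝ) * (‖A‖ + ‖B‖ * C0) * C0 * (‖A‖ + ‖B‖ * C0) ^ (i + 1) *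
              (Nat.factorial (i + 1)) := by ring
        rw [expand]
        rw [hC] at hCp
        have ht : (0:ℝ) ≤ ‖A‖ * (C0 * (‖A‖ + ‖B‖ * C0) ^ (i + 1) * (Nat.factorial (i + 1))) := by
          positivity
        have hti : (0:ℝ) ≤ (i : ℝ) *
            (‖A‖ * (C0 * (‖A‖ + ‖B‖ * C0) ^ (i + 1) * (Nat.factorial (i + 1)))) := by
          positivity
        nlinarith [ht, hti]
      have hfd : D (i + 2) v = -(A (D (i + 1) v)) -
          ∑ j ∈ (Finset.range (i + 2)).attach,
            ((i + 1).choose j.1 : ℝ) • B (D j.1 v) (D (i + 1 - j.1) v) := by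
        rw [hD]; exact formalDeriv_succ_succ _ _ _ _ _
      calc ‖D (i + 2) v‖
          ≤ ‖A (D (i + 1) v)‖ + ‖∑ j ∈ (Finset.range (i + 2)).attach,
              ((i + 1).choose j.1 : ℝ) • B (D j.1 v) (D (i + 1 - j.1) v)‖ := by
            rw [hfd]
            refine (norm_sub_le _ _).trans ?_
            simp
        _ ≤ ‖A‖ * (C0 * C ^ (i + 1) * (Nat.factorial (i + 1))) +
            (i + 2 : ℝ) * (‖B‖ * C0 * C0 * C ^ (i + 1) * (Nat.factorial (i + 1))) := by
            linarith
        _ ≤ C0 * C ^ (i + 2) * (Nat.factorial (i + 2)) := hfin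
end
end

section
/- Suppose ‖A‖ > 0. Let C_der := ‖A‖ + ‖B‖R + ‖B‖‖f‖/‖A‖ and C_J := 2·C_der. For each integer i ≥ 0, the map v ↦ D^i v is differentiable, and its Fréchet derivative J_v(D^i v) at any v ∈ B_R satisfies ‖J_v(D^i v)‖ ≤ C_J^i · i! in operator norm. -/
/-!
Put `a := R + ‖f‖ / ‖A‖` and `C := ‖A‖ + ‖B‖ a`; the choice of `a` is what absorbs the forcing
`f`, which enters only `D¹v`. Strong induction along the recursion gives `‖D^i v‖ ≤ a Cⁱ i!` on
`B_R`: by `binom(n, j) j! (n - j)! = n!` each of the `n + 1` bilinear terms is at most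
`a² Cⁿ n!`, and the count `n + 1` is absorbed into `(n + 1)!`.
Differentiating the recursion by the Leibniz rule doubles the number of bilinear terms, each
pairing a value with a Jacobian; the same count then gives `‖J_v(D^i v)‖ ≤ (2C)ⁱ i!`.
-/

noncomputable section

open Finset Nat

section Recursion

variable {E : Type*} [AddCommGroup E] [Module ℝ E] (A : E → E) (B : E → E → E) (f : E)

theorem formalDeriv_zero_s4 : formalDeriv A B f 0 = id := by
  funext v
  rw [formalDeriv]
  rfl

/-- For `n ≥ 1` this is the defining recursion; at `n = 0` it is `D¹v = f - A v - B(v, v)`. -/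
theorem formalDeriv_succ_apply (n : ℕ) (v : E) :
    formalDeriv A B f (n + 1) v =
      (if n = 0 then f else 0) - A (formalDeriv A B f n v) -
        ∑ j ∈ range (n + 1), (n.choose j : ℝ) •
          B (formalDeriv A B f j v) (formalDeriv A B f (n - j) v) := by
  cases n with
  | zero => simp [formalDeriv]
  | succ n =>
    rw [formalDeriv, sum_attach (range (n + 2)) fun j => ((n + 1).choose j : ℝ) •
      B (formalDeriv A B f j v) (formalDeriv A B f (n + 1 - j) v)]
    simp only [add_eq_zero, one_ne_zero, and_false, if_false, zero_sub]

end Recursion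

theorem ContinuousLinearMap.norm_precompR_add_precompL_le {E F G H : Type*}
    [NormedAddCommGroup E] [NormedSpace ℝ E] [NormedAddCommGroup F] [NormedSpace ℝ F]
    [NormedAddCommGroup G] [NormedSpace ℝ G] [NormedAddCommGroup H] [NormedSpace ℝ H]
    (B : E →L[ℝ] F →L[ℝ] G) (x : E) (y : F) (f' : H →L[ℝ] E) (g' : H →L[ℝ] F) :
    ‖B.precompR H x g' + B.precompL H f' y‖ ≤ ‖B‖ * (‖x‖ * ‖g'‖ + ‖f'‖ * ‖y‖) := by
  have hR : ‖B.precompR H x g'‖ ≤ ‖B‖ * ‖x‖ * ‖g'‖ :=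
    ((B.precompR H).le_opNorm₂ x g').trans (by gcongr; exact norm_precompR_le _ B)
  have hL : ‖B.precompL H f' y‖ ≤ ‖B‖ * ‖f'‖ * ‖y‖ :=
    ((B.precompL H).le_opNorm₂ f' y).trans (by gcongr; exact norm_precompL_le _ B)
  linarith [norm_add_le (B.precompR H x g') (B.precompL H f' y)]

theorem sum_choose_mul_pow_mul_factorial_le {p q r : ℝ} (hp : 0 ≤ p) (hq : 0 ≤ q)
    (hpr : p ≤ r) (hqr : q ≤ r) (n : ℕ) :
    ∑ j ∈ range (n + 1), (n.choose j : ℝ) * ((p ^ j * j !) * (q ^ (n - j) * (n - j)!)) ≤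
      (n + 1) * (r ^ n * n !) := by
  have hterm : ∀ j ∈ range (n + 1),
      (n.choose j : ℝ) * ((p ^ j * j !) * (q ^ (n - j) * (n - j)!)) ≤ r ^ n * n ! := by
    intro j hj
    have hjn : j ≤ n := Nat.lt_succ_iff.mp (mem_range.mp hj)
    have hfact : (n.choose j : ℝ) * j ! * (n - j)! = n ! := by
      exact_mod_cast Nat.choose_mul_factorial_mul_factorial hjn
    calc (n.choose j : ℝ) * ((p ^ j * j !) * (q ^ (n - j) * (n - j)!))
        = p ^ j * q ^ (n - j) * ((n.choose j : ℝ) * j ! * (n - j)!) := by ring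
      _ ≤ r ^ j * r ^ (n - j) * n ! := by
        rw [hfact]; gcongr; exact pow_nonneg (hp.trans hpr) _
      _ = r ^ n * n ! := by rw [← pow_add, Nat.add_sub_cancel' hjn]
  simpa using sum_le_card_nsmul _ _ _ hterm

section Bounds

variable {E : Type*} [NormedAddCommGroup E] [NormedSpace ℝ E]
  (A : E →L[ℝ] E) (B : E →L[ℝ] E →L[ℝ] E) (f : E)

local notation "𝒟" => formalDeriv (fun x => A x) (fun x y => B x y) f

theorem hasFDerivAt_formalDeriv_succ {n : ℕ} {v : E} {J : ℕ → E →L[ℝ] E}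
    (hJ : ∀ j ≤ n, HasFDerivAt (𝒟 j) (J j) v) :
    HasFDerivAt (𝒟 (n + 1))
      (-(A.comp (J n)) - ∑ j ∈ range (n + 1), (n.choose j : ℝ) •
        (B.precompR E (𝒟 j v) (J (n - j)) + B.precompL E (J j) (𝒟 (n - j) v))) v := by
  have hsum := HasFDerivAt.fun_sum (u := range (n + 1)) fun j hj =>
    (B.hasFDerivAt_of_bilinear (hJ j (by simp at hj; omega)) (hJ (n - j) (by omega))).const_smul
      (n.choose j : ℝ)
  have h := ((hasFDerivAt_const (if n = 0 then f else 0) v).sub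
    (A.hasFDerivAt.comp v (hJ n le_rfl))).sub hsum
  rw [zero_sub] at h
  exact h.congr_of_eventuallyEq (Filter.Eventually.of_forall fun w =>
    formalDeriv_succ_apply _ _ f n w)

theorem differentiable_formalDeriv (n : ℕ) : Differentiable ℝ (𝒟 n) := by
  induction n using Nat.strong_induction_on with
  | _ n ih =>
    cases n with
    | zero => rw [formalDeriv_zero_s4]; exact differentiable_id
    | succ n =>
      exact fun v => (hasFDerivAt_formalDeriv_succ A B f
        fun j hj => (ih j (by omega) v).hasFDerivAt).differentiableAt

theorem norm_formalDeriv_succ_le (n : ℕ) (v : E) :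
    ‖𝒟 (n + 1) v‖ ≤ (if n = 0 then ‖f‖ else 0) + ‖A‖ * ‖𝒟 n v‖ +
      ‖B‖ * ∑ j ∈ range (n + 1), (n.choose j : ℝ) * (‖𝒟 j v‖ * ‖𝒟 (n - j) v‖) := by
  rw [formalDeriv_succ_apply, mul_sum]
  refine (norm_sub_le _ _).trans (add_le_add ((norm_sub_le _ _).trans ?_) ?_)
  · rw [apply_ite norm, norm_zero]
    exact add_le_add le_rfl (A.le_opNorm _)
  · refine (norm_sum_le _ _).trans (sum_le_sum fun j _ => ?_)
    rw [norm_smul, norm_natCast]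
    nlinarith [B.le_opNorm₂ (𝒟 j v) (𝒟 (n - j) v), (n.choose j).cast_nonneg (α := ℝ)]

theorem norm_fderiv_formalDeriv_succ_le (n : ℕ) (v : E) :
    ‖fderiv ℝ (𝒟 (n + 1)) v‖ ≤ ‖A‖ * ‖fderiv ℝ (𝒟 n) v‖ +
      ‖B‖ * ∑ j ∈ range (n + 1), (n.choose j : ℝ) *
        (‖𝒟 j v‖ * ‖fderiv ℝ (𝒟 (n - j)) v‖ + ‖fderiv ℝ (𝒟 j) v‖ * ‖𝒟 (n - j) v‖) := by
  rw [(hasFDerivAt_formalDeriv_succ A B f fun j _ =>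
    (differentiable_formalDeriv A B f j v).hasFDerivAt).fderiv, mul_sum]
  refine (norm_sub_le _ _).trans (add_le_add ?_ ?_)
  · rw [norm_neg]
    exact A.opNorm_comp_le _
  · refine (norm_sum_le _ _).trans (sum_le_sum fun j _ => ?_)
    refine (norm_smul_le _ _).trans ?_
    rw [norm_natCast, mul_left_comm]
    gcongr
    exact B.norm_precompR_add_precompL_le _ _ _ _

theorem norm_formalDeriv_add_two_le_of_forall_le {a : ℝ} (ha : 0 ≤ a) {v : E} {n : ℕ}
    (hD : ∀ j ≤ n + 1, ‖𝒟 j v‖ ≤ a * ((‖A‖ + ‖B‖ * a) ^ j * j !)) :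
    ‖𝒟 (n + 2) v‖ ≤ a * ((‖A‖ + ‖B‖ * a) ^ (n + 2) * (n + 2)!) := by
  set c := ‖A‖ + ‖B‖ * a
  have hA := norm_nonneg A
  have hsum : ∑ j ∈ range (n + 2), ((n + 1).choose j : ℝ) * (‖𝒟 j v‖ * ‖𝒟 (n + 1 - j) v‖) ≤
      a * a * ((n + 2) * (c ^ (n + 1) * (n + 1)!)) := by
    calc _ ≤ ∑ j ∈ range (n + 2), ((n + 1).choose j : ℝ) *
          ((a * (c ^ j * j !)) * (a * (c ^ (n + 1 - j) * (n + 1 - j)!))) := by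
          gcongr with j hj
          · exact hD j (by simp at hj; omega)
          · exact hD _ (by omega)
      _ = a * a * ∑ j ∈ range (n + 2), ((n + 1).choose j : ℝ) *
          ((c ^ j * j !) * (c ^ (n + 1 - j) * (n + 1 - j)!)) := by
          rw [mul_sum]; exact sum_congr rfl fun j _ => by ring
      _ ≤ a * a * ((n + 2) * (c ^ (n + 1) * (n + 1)!)) := by
          gcongr
          exact_mod_cast sum_choose_mul_pow_mul_factorial_le (by positivity) (by positivity)
            le_rfl le_rfl (n + 1)
  calc ‖𝒟 (n + 2) v‖
      ≤ ‖A‖ * (a * (c ^ (n + 1) * (n + 1)!)) +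
          ‖B‖ * (a * a * ((n + 2) * (c ^ (n + 1) * (n + 1)!))) := by
        refine (norm_formalDeriv_succ_le A B f (n + 1) v).trans ?_
        simp only [add_eq_zero, one_ne_zero, and_false, if_false, zero_add]
        gcongr
        exact hD _ le_rfl
    _ ≤ a * (c ^ (n + 1) * (n + 1)!) * ((n + 2) * c) := by
        have : 0 ≤ a * (c ^ (n + 1) * (n + 1)!) := by positivity
        nlinarith [mul_nonneg this hA, (n.cast_nonneg : (0 : ℝ) ≤ n)]
    _ = a * (c ^ (n + 2) * (n + 2)!) := by
        rw [factorial_succ (n + 1), pow_succ]; push_cast; ring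

theorem norm_formalDeriv_le {R a : ℝ} (hRa : R ≤ a) (hf : ‖f‖ + ‖A‖ * R ≤ ‖A‖ * a)
    {v : E} (hv : ‖v‖ ≤ R) (n : ℕ) :
    ‖𝒟 n v‖ ≤ a * ((‖A‖ + ‖B‖ * a) ^ n * n !) := by
  have hva : ‖v‖ ≤ a := hv.trans hRa
  have ha : 0 ≤ a := (norm_nonneg v).trans hva
  induction n using Nat.strong_induction_on with
  | _ n ih =>
    match n with
    | 0 => simpa [formalDeriv_zero_s4] using hva
    | 1 =>
      have h : ‖𝒟 1 v‖ ≤ ‖f‖ + ‖A‖ * ‖v‖ + ‖B‖ * (‖v‖ * ‖v‖) := by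
        simpa [formalDeriv_zero_s4] using norm_formalDeriv_succ_le A B f 0 v
      have hvv : ‖v‖ * ‖v‖ ≤ a * a := mul_self_le_mul_self (norm_nonneg v) hva
      simp only [pow_one, factorial_one, Nat.cast_one, mul_one]
      nlinarith [mul_le_mul_of_nonneg_left hv (norm_nonneg A),
        mul_le_mul_of_nonneg_left hvv (norm_nonneg B)]
    | n + 2 => exact norm_formalDeriv_add_two_le_of_forall_le A B f ha fun j hj => ih j (by omega)

theorem norm_fderiv_formalDeriv_succ_le_of_forall_le {a : ℝ} (ha : 0 ≤ a) {v : E} {n : ℕ}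
    (hD : ∀ j ≤ n, ‖𝒟 j v‖ ≤ a * ((‖A‖ + ‖B‖ * a) ^ j * j !))
    (hJ : ∀ j ≤ n, ‖fderiv ℝ (𝒟 j) v‖ ≤ (2 * (‖A‖ + ‖B‖ * a)) ^ j * j !) :
    ‖fderiv ℝ (𝒟 (n + 1)) v‖ ≤ (2 * (‖A‖ + ‖B‖ * a)) ^ (n + 1) * (n + 1)! := by
  set c := ‖A‖ + ‖B‖ * a
  have hA := norm_nonneg A
  have hc0 : 0 ≤ c := by positivity
  have hc : c ≤ 2 * c := by linarith
  have hsum : ∑ j ∈ range (n + 1), (n.choose j : ℝ) *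
      (‖𝒟 j v‖ * ‖fderiv ℝ (𝒟 (n - j)) v‖ + ‖fderiv ℝ (𝒟 j) v‖ * ‖𝒟 (n - j) v‖) ≤
      a * (2 * ((n + 1) * ((2 * c) ^ n * n !))) := by
    calc _ ≤ ∑ j ∈ range (n + 1), (n.choose j : ℝ) *
          ((a * (c ^ j * j !)) * ((2 * c) ^ (n - j) * (n - j)!) +
            ((2 * c) ^ j * j !) * (a * (c ^ (n - j) * (n - j)!))) := by
          gcongr with j hj <;> have := mem_range.mp hj
          · exact hD j (by omega)
          · exact hJ _ (by omega)
          · exact hJ j (by omega)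
          · exact hD _ (by omega)
      _ = a * (∑ j ∈ range (n + 1), (n.choose j : ℝ) *
            ((c ^ j * j !) * ((2 * c) ^ (n - j) * (n - j)!)) +
          ∑ j ∈ range (n + 1), (n.choose j : ℝ) *
            (((2 * c) ^ j * j !) * (c ^ (n - j) * (n - j)!))) := by
          rw [← sum_add_distrib, mul_sum]; exact sum_congr rfl fun j _ => by ring
      _ ≤ a * (2 * ((n + 1) * ((2 * c) ^ n * n !))) := by
          refine mul_le_mul_of_nonneg_left ?_ ha
          linarith [sum_choose_mul_pow_mul_factorial_le hc0 (by positivity) hc le_rfl n,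
            sum_choose_mul_pow_mul_factorial_le (by positivity) hc0 le_rfl hc n]
  calc ‖fderiv ℝ (𝒟 (n + 1)) v‖
      ≤ ‖A‖ * ((2 * c) ^ n * n !) + ‖B‖ * (a * (2 * ((n + 1) * ((2 * c) ^ n * n !)))) := by
        refine (norm_fderiv_formalDeriv_succ_le A B f n v).trans ?_
        gcongr
        exact hJ n le_rfl
    _ ≤ (2 * c) ^ n * n ! * (2 * c * (n + 1)) := by
        have : 0 ≤ (2 * c) ^ n * n ! := by positivity
        nlinarith [mul_nonneg this hA, (n.cast_nonneg : (0 : ℝ) ≤ n)]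
    _ = (2 * c) ^ (n + 1) * (n + 1)! := by
        rw [factorial_succ, pow_succ]; push_cast; ring

theorem norm_fderiv_formalDeriv_le {a : ℝ} (ha : 0 ≤ a) {v : E}
    (hD : ∀ j, ‖𝒟 j v‖ ≤ a * ((‖A‖ + ‖B‖ * a) ^ j * j !)) (n : ℕ) :
    ‖fderiv ℝ (𝒟 n) v‖ ≤ (2 * (‖A‖ + ‖B‖ * a)) ^ n * n ! := by
  induction n using Nat.strong_induction_on with
  | _ n ih =>
    cases n with
    | zero => simpa [formalDeriv_zero_s4] using ContinuousLinearMap.norm_id_le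
    | succ n =>
      exact norm_fderiv_formalDeriv_succ_le_of_forall_le A B f ha (fun j _ => hD j)
        fun j hj => ih j (by omega)

end Bounds

theorem formalDeriv_jacobian_bound_general {d : ℕ}
    (A : EuclideanSpace ℝ (Fin d) →L[ℝ] EuclideanSpace ℝ (Fin d))
    (B : EuclideanSpace ℝ (Fin d) →L[ℝ] EuclideanSpace ℝ (Fin d) →L[ℝ] EuclideanSpace ℝ (Fin d))
    (f : EuclideanSpace ℝ (Fin d))
    (R : ℝ) (hA : 0 < ‖A‖) :
    ∀ i : ℕ,
      Differentiable ℝ (formalDeriv (fun x => A x) (fun x y => B x y) f i) ∧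
      ∀ v : EuclideanSpace ℝ (Fin d), ‖v‖ ≤ R →
        ‖fderiv ℝ (formalDeriv (fun x => A x) (fun x y => B x y) f i) v‖ ≤
          (2 * (‖A‖ + ‖B‖ * R + ‖B‖ * ‖f‖ / ‖A‖)) ^ i * (Nat.factorial i) := by
  intro i
  refine ⟨differentiable_formalDeriv A B f i, fun v hv => ?_⟩
  set a := R + ‖f‖ / ‖A‖
  have hRa : R ≤ a := le_add_of_nonneg_right (by positivity)
  have hf : ‖f‖ + ‖A‖ * R ≤ ‖A‖ * a := by
    rw [mul_add, mul_div_cancel₀ _ hA.ne']; linarith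
  have ha : 0 ≤ a := (norm_nonneg v).trans (hv.trans hRa)
  convert norm_fderiv_formalDeriv_le A B f ha
    (fun j => norm_formalDeriv_le A B f hRa hf hv j) i using 3
  ring

/-- with `C_der = ‖A‖ + ‖B‖R + ‖B‖‖f‖/‖A‖` and `C_J = 2 C_der`,
each map `v ↦ D^i v` is differentiable and its Fréchet derivative at any
`v ∈ B_R` has operator norm at most `C_J^i · i!`. -/
theorem formalDeriv_jacobian_bound {d : ℕ}
    (A : EuclideanSpace ℝ (Fin d) →L[ℝ] EuclideanSpace ℝ (Fin d))
    (B : EuclideanSpace ℝ (Fin d) →L[ℝ] EuclideanSpace ℝ (Fin d) →L[ℝ] EuclideanSpace ℝ (Fin d))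
    (f : EuclideanSpace ℝ (Fin d))
    (R : ℝ) (hR : 0 < R) (hA : 0 < ‖A‖) :
    ∀ i : ℕ,
      Differentiable ℝ (formalDeriv (fun x => A x) (fun x y => B x y) f i) ∧
      ∀ v : EuclideanSpace ℝ (Fin d), ‖v‖ ≤ R →
        ‖fderiv ℝ (formalDeriv (fun x => A x) (fun x y => B x y) f i) v‖ ≤
          (2 * (‖A‖ + ‖B‖ * R + ‖B‖ * ‖f‖ / ‖A‖)) ^ i * (Nat.factorial i) :=
  formalDeriv_jacobian_bound_general A B f R hA
end
end

section
/- For every a, b ∈ [−1/2, 1/2] \ {0} with |a − b| ≤ 0.1, one has |f(a) − f(b)| ≥ √2 · |a − b|. -/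
open Set

noncomputable section

/-- The one-dimensional return map `f` of the geometric Lorenz model:
`f(x) = θ x^α - 1/2` for `x > 0` and `f(x) = -θ(-x)^α + 1/2` for `x < 0`
(the value at `0` is irrelevant). -/
def lorenzReturnMap (α θ : ℝ) (x : ℝ) : ℝ :=
  if 0 < x then θ * x ^ α - 1 / 2
  else if x < 0 then -(θ * (-x) ^ α) + 1 / 2
  else 0

lemma sqrt2_lt : Real.sqrt 2 < 1.42 := by
  rw [show (1.42:ℝ) = Real.sqrt (1.42^2) by rw [Real.sqrt_sq]; norm_num]
  exact Real.sqrt_lt_sqrt (by norm_num) (by norm_num)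

lemma sqrt2_gt : (1.4:ℝ) < Real.sqrt 2 := by
  rw [show (1.4:ℝ) = Real.sqrt (1.4^2) by rw [Real.sqrt_sq]; norm_num]
  exact Real.sqrt_lt_sqrt (by norm_num) (by norm_num)

lemma theta_pos (α θ : ℝ) (hα1 : 1 / Real.sqrt 2 < α)
    (hθ1 : (2 : ℝ) ^ α / (Real.sqrt 2 * α) < θ) : 0 < θ := by
  have hsq2 : (0:ℝ) < Real.sqrt 2 := Real.sqrt_pos.2 (by norm_num)
  have hα0 : 0 < α := lt_trans (by positivity) hα1
  have h2α : (0:ℝ) < (2:ℝ) ^ α := Real.rpow_pos_of_pos (by norm_num) _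
  exact lt_trans (div_pos h2α (mul_pos hsq2 hα0)) hθ1

/-- Same-sign core estimate. -/
lemma same_sign_core (α θ : ℝ)
    (hα1 : 1 / Real.sqrt 2 < α) (hα2 : α < 1)
    (hθ1 : (2 : ℝ) ^ α / (Real.sqrt 2 * α) < θ)
    {s t : ℝ} (ht : 0 < t) (hts : t ≤ s) (hs : s ≤ 1/2) :
    Real.sqrt 2 * (s - t) ≤ θ * (s ^ α - t ^ α) := by
  have hsq2 : (0:ℝ) < Real.sqrt 2 := Real.sqrt_pos.2 (by norm_num)
  have hα0 : 0 < α := lt_trans (by positivity) hα1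
  have hspos : 0 < s := lt_of_lt_of_le ht hts
  have h2α : (0:ℝ) < (2:ℝ) ^ α := Real.rpow_pos_of_pos (by norm_num) _
  have hθpos : 0 < θ := theta_pos α θ hα1 hθ1
  -- Bernoulli: (t/s)^α ≤ 1 + α * (t/s - 1)
  have hbern : (t/s) ^ α ≤ 1 + α * (t/s - 1) := by
    have := rpow_one_add_le_one_add_mul_self (s := t/s - 1) (p := α)
      (by have : 0 < t/s := div_pos ht hspos; linarith) hα0.le hα2.le
    simpa using this
  have hdiv : (t/s) ^ α = t ^ α / s ^ α := Real.div_rpow ht.le hspos.le α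
  have hsα : (0:ℝ) < s ^ α := Real.rpow_pos_of_pos hspos _
  -- s^α - t^α ≥ α * s^(α-1) * (s - t)
  have key : α * (s ^ (α - 1)) * (s - t) ≤ s ^ α - t ^ α := by
    have h1 : t ^ α ≤ s ^ α * (1 + α * (t/s - 1)) := by
      rw [hdiv] at hbern
      calc t ^ α = s ^ α * (t ^ α / s ^ α) := by field_simp
        _ ≤ s ^ α * (1 + α * (t/s - 1)) := by
            exact mul_le_mul_of_nonneg_left hbern hsα.le
    have h2 : s ^ (α - 1) = s ^ α / s := by
      rw [Real.rpow_sub hspos, Real.rpow_one]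
    rw [h2]
    have : s ^ α * (1 + α * (t/s - 1)) = s ^ α - α * (s ^ α / s) * (s - t) := by
      field_simp; ring
    linarith [h1.trans_eq this]
  -- s^(α-1) ≥ (1/2)^(α-1) = 2/2^α
  have hmono : (2:ℝ) / 2 ^ α ≤ s ^ (α - 1) := by
    have h1 : ((1:ℝ)/2) ^ (α - 1) ≤ s ^ (α - 1) := by
      exact Real.rpow_le_rpow_of_nonpos hspos hs (by linarith)
    have h2 : ((1:ℝ)/2) ^ (α - 1) = 2 / 2 ^ α := by
      rw [show (1:ℝ)/2 = 2⁻¹ by norm_num, Real.inv_rpow (by norm_num),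
        Real.rpow_sub (by norm_num), Real.rpow_one]
      field_simp
    linarith [h2 ▸ h1]
  -- θ * α * (2/2^α) ≥ √2
  have hθα : Real.sqrt 2 ≤ θ * α * (2 / 2 ^ α) := by
    have hss : Real.sqrt 2 * Real.sqrt 2 = 2 := Real.mul_self_sqrt (by norm_num)
    have h1 : (2:ℝ) ^ α / (Real.sqrt 2 * α) * α * (2 / 2 ^ α) = 2 / Real.sqrt 2 := by
      field_simp
    have h2 : (2:ℝ) / Real.sqrt 2 = Real.sqrt 2 := by
      rw [div_eq_iff hsq2.ne']; exact hss.symm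
    have h3 : (2:ℝ) ^ α / (Real.sqrt 2 * α) * α * (2 / 2 ^ α) ≤ θ * α * (2 / 2 ^ α) := by
      have : 0 < α * (2 / 2 ^ α) := by positivity
      nlinarith [hθ1]
    linarith [h1 ▸ h3, h2 ▸ (h1 ▸ h3)]
  -- combine
  have hst : 0 ≤ s - t := by linarith
  calc Real.sqrt 2 * (s - t) ≤ (θ * α * (2 / 2 ^ α)) * (s - t) :=
        mul_le_mul_of_nonneg_right hθα hst
    _ ≤ (θ * α * s ^ (α - 1)) * (s - t) := by
        have : θ * α * (2 / 2 ^ α) ≤ θ * α * s ^ (α - 1) := by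
          apply mul_le_mul_of_nonneg_left hmono (by positivity)
        exact mul_le_mul_of_nonneg_right this hst
    _ = θ * (α * s ^ (α - 1) * (s - t)) := by ring
    _ ≤ θ * (s ^ α - t ^ α) := mul_le_mul_of_nonneg_left key hθpos.le

/-- Same-sign estimate with absolute values. -/
lemma same_sign_abs (α θ : ℝ)
    (hα1 : 1 / Real.sqrt 2 < α) (hα2 : α < 1)
    (hθ1 : (2 : ℝ) ^ α / (Real.sqrt 2 * α) < θ)
    {s t : ℝ} (hs0 : 0 < s) (ht0 : 0 < t) (hs : s ≤ 1/2) (ht : t ≤ 1/2) :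
    Real.sqrt 2 * |s - t| ≤ |θ * s ^ α - θ * t ^ α| := by
  rcases le_total t s with h | h
  · have hcore := same_sign_core α θ hα1 hα2 hθ1 ht0 h hs
    have hle : t ^ α ≤ s ^ α := Real.rpow_le_rpow ht0.le h
      (le_of_lt (lt_trans (by positivity) hα1))
    have hθpos : 0 < θ := theta_pos α θ hα1 hθ1
    rw [abs_of_nonneg (by linarith), abs_of_nonneg (by nlinarith)]
    linarith [hcore]
  · have hcore := same_sign_core α θ hα1 hα2 hθ1 hs0 h ht
    have hle : s ^ α ≤ t ^ α := Real.rpow_le_rpow hs0.le h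
      (le_of_lt (lt_trans (by positivity) hα1))
    have hθpos : 0 < θ := theta_pos α θ hα1 hθ1
    rw [abs_of_nonpos (by linarith), abs_of_nonpos (by nlinarith)]
    linarith [hcore]

/-- Small positive numbers: s^α ≤ 0.2 when s ≤ 0.1 and α > 1/√2. -/
lemma small_rpow (α : ℝ) (hα1 : 1 / Real.sqrt 2 < α) (hα2 : α < 1)
    {s : ℝ} (hs0 : 0 < s) (hs : s ≤ 0.1) : s ^ α ≤ 0.2 := by
  have hα7 : (0.7:ℝ) ≤ α := by
    have hsq2 : (0:ℝ) < Real.sqrt 2 := Real.sqrt_pos.2 (by norm_num)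
    have h14 : (1:ℝ)/1.42 < 1 / Real.sqrt 2 := one_div_lt_one_div_of_lt hsq2 sqrt2_lt
    have h7 : (0.7:ℝ) ≤ 1/1.42 := by norm_num
    linarith
  have h1 : s ^ α ≤ (0.1:ℝ) ^ α :=
    Real.rpow_le_rpow hs0.le hs (by linarith)
  have h2 : (0.1:ℝ) ^ α ≤ (0.1:ℝ) ^ (0.7:ℝ) :=
    Real.rpow_le_rpow_of_exponent_ge (by norm_num) (by norm_num) hα7
  have h3 : (0.1:ℝ) ^ (0.7:ℝ) ≤ 0.2 := by
    have hpos : (0:ℝ) < (0.1:ℝ) ^ (0.7:ℝ) := Real.rpow_pos_of_pos (by norm_num) _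
    refine le_of_pow_le_pow_left₀ (n := 10) (by norm_num) (by norm_num) ?_
    have : ((0.1:ℝ) ^ (0.7:ℝ)) ^ (10:ℕ) = (0.1:ℝ) ^ (7:ℝ) := by
      rw [← Real.rpow_natCast ((0.1:ℝ) ^ (0.7:ℝ)) 10, ← Real.rpow_mul (by norm_num)]
      norm_num
    rw [this, show (7:ℝ) = ((7:ℕ):ℝ) by norm_num, Real.rpow_natCast]
    norm_num
  linarith

/-- expansion property of the return map: for all
`a, b ∈ [-1/2, 1/2] \ {0}` with `|a - b| ≤ 0.1`,
`|f(a) - f(b)| ≥ √2 |a - b|`. -/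
theorem lorenzReturnMap_expansion (α θ : ℝ)
    (hα1 : 1 / Real.sqrt 2 < α) (hα2 : α < 1)
    (hθ1 : (2 : ℝ) ^ α / (Real.sqrt 2 * α) < θ) (hθ2 : θ < (2 : ℝ) ^ α) :
    ∀ a b : ℝ, a ∈ Icc (-(1 / 2) : ℝ) (1 / 2) → b ∈ Icc (-(1 / 2) : ℝ) (1 / 2) →
      a ≠ 0 → b ≠ 0 → |a - b| ≤ 0.1 →
      Real.sqrt 2 * |a - b| ≤ |lorenzReturnMap α θ a - lorenzReturnMap α θ b| := by
  intro a b ha hb ha0 hb0 hab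
  have hsq2 : (0:ℝ) < Real.sqrt 2 := Real.sqrt_pos.2 (by norm_num)
  have hα0 : 0 < α := lt_trans (by positivity) hα1
  have hθpos : 0 < θ := theta_pos α θ hα1 hθ1
  have hθ2' : θ ≤ 2 := by
    have : (2:ℝ) ^ α ≤ (2:ℝ) ^ (1:ℝ) :=
      Real.rpow_le_rpow_of_exponent_le (by norm_num) hα2.le
    rw [Real.rpow_one] at this; linarith
  obtain ⟨ha1, ha2⟩ := ha
  obtain ⟨hb1, hb2⟩ := hb
  -- mixed-sign auxiliary
  have mixed : ∀ s t : ℝ, 0 < s → 0 < t → s + t ≤ 0.1 →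
      Real.sqrt 2 * (s + t) ≤ |(θ * s ^ α - 1/2) - (-(θ * t ^ α) + 1/2)| := by
    intro s t hs0 ht0 hst
    have hsα : s ^ α ≤ 0.2 := small_rpow α hα1 hα2 hs0 (by linarith)
    have htα : t ^ α ≤ 0.2 := small_rpow α hα1 hα2 ht0 (by linarith)
    have hsαpos : 0 < s ^ α := Real.rpow_pos_of_pos hs0 _
    have htαpos : 0 < t ^ α := Real.rpow_pos_of_pos ht0 _
    have hsum : θ * s ^ α + θ * t ^ α ≤ 0.8 := by nlinarith
    have hlhs : Real.sqrt 2 * (s + t) ≤ 0.15 := by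
      have := sqrt2_lt
      nlinarith
    have : (θ * s ^ α - 1/2) - (-(θ * t ^ α) + 1/2) = θ * s ^ α + θ * t ^ α - 1 := by ring
    rw [this, abs_of_nonpos (by linarith)]
    linarith
  rcases ha0.lt_or_gt with haneg | hapos <;> rcases hb0.lt_or_gt with hbneg | hbpos
  · -- both negative
    have hfa : lorenzReturnMap α θ a = -(θ * (-a) ^ α) + 1/2 := by
      unfold lorenzReturnMap
      rw [if_neg (by linarith), if_pos haneg]
    have hfb : lorenzReturnMap α θ b = -(θ * (-b) ^ α) + 1/2 := by
      unfold lorenzReturnMap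
      rw [if_neg (by linarith), if_pos hbneg]
    have := same_sign_abs α θ hα1 hα2 hθ1 (s := -a) (t := -b)
      (by linarith) (by linarith) (by linarith) (by linarith)
    rw [hfa, hfb]
    have heq1 : |(-a) - (-b)| = |a - b| := by rw [← abs_neg]; ring_nf
    have heq2 : |(-(θ * (-a) ^ α) + 1/2) - (-(θ * (-b) ^ α) + 1/2)|
        = |θ * (-a) ^ α - θ * (-b) ^ α| := by rw [← abs_neg]; ring_nf
    rw [heq2]
    calc Real.sqrt 2 * |a - b| = Real.sqrt 2 * |(-a) - (-b)| := by rw [heq1]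
      _ ≤ _ := this
  · -- a < 0 < b
    have hfa : lorenzReturnMap α θ a = -(θ * (-a) ^ α) + 1/2 := by
      unfold lorenzReturnMap
      rw [if_neg (by linarith), if_pos haneg]
    have hfb : lorenzReturnMap α θ b = θ * b ^ α - 1/2 := by
      unfold lorenzReturnMap
      rw [if_pos hbpos]
    have habs : |a - b| = b + (-a) := by
      rw [abs_of_nonpos (by linarith)]; ring
    have := mixed b (-a) hbpos (by linarith) (by rw [habs] at hab; linarith)
    rw [hfa, hfb, habs]
    calc Real.sqrt 2 * (b + -a) ≤ |(θ * b ^ α - 1/2) - (-(θ * (-a) ^ α) + 1/2)| := this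
      _ = |(-(θ * (-a) ^ α) + 1/2) - (θ * b ^ α - 1/2)| := abs_sub_comm _ _
  · -- b < 0 < a
    have hfa : lorenzReturnMap α θ a = θ * a ^ α - 1/2 := by
      unfold lorenzReturnMap
      rw [if_pos hapos]
    have hfb : lorenzReturnMap α θ b = -(θ * (-b) ^ α) + 1/2 := by
      unfold lorenzReturnMap
      rw [if_neg (by linarith), if_pos hbneg]
    have habs : |a - b| = a + (-b) := by
      rw [abs_of_nonneg (by linarith)]; ring
    have := mixed a (-b) hapos (by linarith) (by rw [habs] at hab; linarith)
    rw [hfa, hfb, habs]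
    exact this
  · -- both positive
    have hfa : lorenzReturnMap α θ a = θ * a ^ α - 1/2 := by
      unfold lorenzReturnMap; rw [if_pos hapos]
    have hfb : lorenzReturnMap α θ b = θ * b ^ α - 1/2 := by
      unfold lorenzReturnMap; rw [if_pos hbpos]
    have := same_sign_abs α θ hα1 hα2 hθ1 (s := a) (t := b)
      hapos hbpos (by linarith) (by linarith)
    rw [hfa, hfb]
    have : |(θ * a ^ α - 1/2) - (θ * b ^ α - 1/2)| = |θ * a ^ α - θ * b ^ α| := by
      ring_nf
    rw [this]
    exact same_sign_abs α θ hα1 hα2 hθ1 hapos hbpos (by linarith) (by linarith)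
end
end

section
/- Fix k ∈ ℕ, u ∈ B_R and v ∈ B_R with q(u) > 0 and q(v) > 0. Then the probability (over the noise (Z_i)) that v belongs to the support S_k of the smoother equals ∏_{i=0}^{k} ∏_{j=1}^{d_o} max(0, 1 − |(H Ψ_{t_i}(u))_j − (H Ψ_{t_i}(v))_j| / (2ε)). -/
/-!
The point `v` lies in the smoother support exactly when, for every `i ≤ k`, the noise `Z i`
falls in the sup-norm `ε`-ball about `H Ψ_{t_i}(v) - H Ψ_{t_i}(u)`. By independence the
probability is the product over `i` of these events, and each factor is the normalized volume
of the intersection of two `ε`-boxes, which splits over coordinates into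
`(2ε - |Δ_j|)⁺ / (2ε)`.
-/

open MeasureTheory ProbabilityTheory Set
open scoped ENNReal

noncomputable section

/-- The ℓ¹ norm on `ℝ^n`. -/
def norm1 {n : ℕ} (x : EuclideanSpace ℝ (Fin n)) : ℝ := ∑ j, |x j|

/-- The supremum norm on `ℝ^n`. -/
def normInf {n : ℕ} (x : EuclideanSpace ℝ (Fin n)) : ℝ := ⨆ j, |x j|

/-- The support of the smoothing distribution after observations `Y_0, …, Y_k`,
where `Y_i = H Ψ_{t_i}(u) + Z_i(ω)`, `t_i = i h`, and the noise is uniform on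
`[-ε, ε]^{d_o}`:  the set of `x ∈ B_R` with `q(x) > 0` and
`‖H Ψ_{t_i}(x) - Y_i‖_∞ ≤ ε` for all `0 ≤ i ≤ k`. -/
def smootherSupp {d dO : ℕ} {Ω : Type*}
    (Ψ : ℝ → EuclideanSpace ℝ (Fin d) → EuclideanSpace ℝ (Fin d))
    (H : EuclideanSpace ℝ (Fin d) →L[ℝ] EuclideanSpace ℝ (Fin dO))
    (q : EuclideanSpace ℝ (Fin d) → ℝ) (R h ε : ℝ)
    (u : EuclideanSpace ℝ (Fin d)) (Z : ℕ → Ω → EuclideanSpace ℝ (Fin dO))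
    (k : ℕ) (ω : Ω) : Set (EuclideanSpace ℝ (Fin d)) :=
  {x | ‖x‖ ≤ R ∧ 0 < q x ∧
    ∀ i ≤ k, normInf (H (Ψ (i * h) x) - (H (Ψ (i * h) u) + Z i ω)) ≤ ε}

def supClosedBall {n : ℕ} (c : EuclideanSpace ℝ (Fin n)) (r : ℝ) :
    Set (EuclideanSpace ℝ (Fin n)) :=
  {z | ∀ j, |z j - c j| ≤ r}

lemma normInf_le_iff {n : ℕ} (x : EuclideanSpace ℝ (Fin n)) {r : ℝ} (hr : 0 ≤ r) :
    normInf x ≤ r ↔ ∀ j, |x j| ≤ r := by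
  rcases isEmpty_or_nonempty (Fin n) with _ | _
  · simp [normInf, Real.iSup_of_isEmpty, hr]
  · exact ciSup_le_iff (Set.finite_range _).bddAbove

lemma supClosedBall_eq_preimage_pi {n : ℕ} (c : EuclideanSpace ℝ (Fin n)) (r : ℝ) :
    supClosedBall c r = (MeasurableEquiv.toLp 2 (Fin n → ℝ)).symm ⁻¹'
      Set.univ.pi fun j => Icc (c j - r) (c j + r) := by
  ext z
  simp [supClosedBall, ← Real.closedBall_eq_Icc, Real.dist_eq]

lemma measurableSet_supClosedBall {n : ℕ} (c : EuclideanSpace ℝ (Fin n)) (r : ℝ) :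
    MeasurableSet (supClosedBall c r) := by
  rw [supClosedBall_eq_preimage_pi]
  exact (MeasurableEquiv.measurable _) (.univ_pi fun _ => measurableSet_Icc)

lemma Real.volume_Icc_sub_add_inter_Icc_sub_add (a b r : ℝ) :
    volume (Icc (a - r) (a + r) ∩ Icc (b - r) (b + r)) = ENNReal.ofReal (2 * r - |a - b|) := by
  rw [Icc_inter_Icc, Real.volume_Icc, max_sub_sub_right, min_add_add_right, ← max_sub_min_eq_abs']
  ring_nf

lemma volume_supClosedBall_inter {n : ℕ} (c c' : EuclideanSpace ℝ (Fin n)) (r : ℝ) :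
    volume (supClosedBall c r ∩ supClosedBall c' r) =
      ∏ j, ENNReal.ofReal (2 * r - |c j - c' j|) := by
  rw [supClosedBall_eq_preimage_pi, supClosedBall_eq_preimage_pi, ← Set.preimage_inter,
    ← Set.pi_inter_distrib,
    (EuclideanSpace.volume_preserving_symm_measurableEquiv_toLp (Fin n)).measure_preimage
      (MeasurableSet.univ_pi fun _ => measurableSet_Icc.inter measurableSet_Icc).nullMeasurableSet,
    volume_pi_pi]
  exact Finset.prod_congr rfl fun j _ => Real.volume_Icc_sub_add_inter_Icc_sub_add _ _ _

lemma uniform_supClosedBall_apply {n : ℕ} {r : ℝ} (hr : 0 < r) (c : EuclideanSpace ℝ (Fin n)) :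
    ((ENNReal.ofReal ((2 * r) ^ n))⁻¹ •
        volume.restrict {z : EuclideanSpace ℝ (Fin n) | ∀ j, |z j| ≤ r}) (supClosedBall c r) =
      ENNReal.ofReal (∏ j, max 0 (1 - |c j| / (2 * r))) := by
  have h2r : 0 < 2 * r := by positivity
  have hzero : {z : EuclideanSpace ℝ (Fin n) | ∀ j, |z j| ≤ r} = supClosedBall 0 r := by
    simp [supClosedBall]
  have hfactor : ∀ j, ENNReal.ofReal (2 * r - |c j - (0 : EuclideanSpace ℝ (Fin n)) j|) =
      ENNReal.ofReal (2 * r) * ENNReal.ofReal (max 0 (1 - |c j| / (2 * r))) := by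
    intro j
    rw [← ENNReal.ofReal_mul h2r.le, mul_max_of_nonneg _ _ h2r.le, mul_zero, mul_sub, mul_one,
      mul_div_cancel₀ _ h2r.ne', PiLp.zero_apply, sub_zero, ENNReal.ofReal_max, ENNReal.ofReal_zero,
      zero_max]
  rw [hzero, Measure.smul_apply, Measure.restrict_apply (measurableSet_supClosedBall c r),
    volume_supClosedBall_inter, smul_eq_mul, Finset.prod_congr rfl fun j _ => hfactor j,
    Finset.prod_mul_distrib, Finset.prod_const, Finset.card_univ, Fintype.card_fin,
    ← ENNReal.ofReal_pow h2r.le, ← mul_assoc,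
    ENNReal.inv_mul_cancel (ENNReal.ofReal_pos.2 (pow_pos h2r n)).ne' ENNReal.ofReal_ne_top,
    one_mul, ENNReal.ofReal_prod_of_nonneg fun _ _ => le_max_left _ _]

lemma setOf_mem_smootherSupp {d dO : ℕ} {Ω : Type*}
    (Ψ : ℝ → EuclideanSpace ℝ (Fin d) → EuclideanSpace ℝ (Fin d))
    (H : EuclideanSpace ℝ (Fin d) →L[ℝ] EuclideanSpace ℝ (Fin dO))
    (q : EuclideanSpace ℝ (Fin d) → ℝ) {R ε : ℝ} (h : ℝ) (hε : 0 ≤ ε)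
    (u : EuclideanSpace ℝ (Fin d)) (Z : ℕ → Ω → EuclideanSpace ℝ (Fin dO)) (k : ℕ)
    {v : EuclideanSpace ℝ (Fin d)} (hv : ‖v‖ ≤ R) (hqv : 0 < q v) :
    {ω | v ∈ smootherSupp Ψ H q R h ε u Z k ω} =
      ⋂ i ∈ Finset.range (k + 1),
        Z i ⁻¹' supClosedBall (H (Ψ (i * h) v) - H (Ψ (i * h) u)) ε := by
  have hresidual : ∀ (x y z : EuclideanSpace ℝ (Fin dO)),
      normInf (x - (y + z)) ≤ ε ↔ z ∈ supClosedBall (x - y) ε := by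
    intro x y z
    rw [normInf_le_iff _ hε]
    refine forall_congr' fun j => ?_
    rw [← abs_neg]
    simp only [PiLp.sub_apply, PiLp.add_apply]
    ring_nf
  ext ω
  simp only [smootherSupp, Set.mem_ofPred_eq, Set.mem_iInter, Set.mem_preimage, Finset.mem_range,
    Nat.lt_succ_iff, hresidual, hv, hqv, true_and]

theorem prob_in_smoother_support_general {d dO : ℕ}
    (R : ℝ)
    (Ψ : ℝ → EuclideanSpace ℝ (Fin d) → EuclideanSpace ℝ (Fin d))
    (h : ℝ)
    (H : EuclideanSpace ℝ (Fin d) →L[ℝ] EuclideanSpace ℝ (Fin dO))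
    (ε : ℝ) (hε : 0 < ε)
    (Ω : Type*) [MeasurableSpace Ω] (μ : Measure Ω)
    (Z : ℕ → Ω → EuclideanSpace ℝ (Fin dO))
    (hZmeas : ∀ i, Measurable (Z i))
    (hZindep : iIndepFun Z μ)
    (hZlaw : ∀ i, Measure.map (Z i) μ =
      (ENNReal.ofReal ((2 * ε) ^ dO))⁻¹ •
        volume.restrict {z : EuclideanSpace ℝ (Fin dO) | ∀ j, |z j| ≤ ε})
    (q : EuclideanSpace ℝ (Fin d) → ℝ)
    (u : EuclideanSpace ℝ (Fin d))
    (v : EuclideanSpace ℝ (Fin d)) (hv : ‖v‖ ≤ R) (hqv : 0 < q v)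
    (k : ℕ) :
    μ {ω | v ∈ smootherSupp Ψ H q R h ε u Z k ω} =
      ENNReal.ofReal (∏ i ∈ Finset.range (k + 1), ∏ j : Fin dO,
        max 0 (1 - |H (Ψ (i * h) u) j - H (Ψ (i * h) v) j| / (2 * ε))) := by
  have hobs : ∀ i, μ (Z i ⁻¹' supClosedBall (H (Ψ (i * h) v) - H (Ψ (i * h) u)) ε) =
      ENNReal.ofReal (∏ j : Fin dO,
        max 0 (1 - |H (Ψ (i * h) u) j - H (Ψ (i * h) v) j| / (2 * ε))) := by
    intro i
    rw [← Measure.map_apply (hZmeas i) (measurableSet_supClosedBall _ _), hZlaw i,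
      uniform_supClosedBall_apply hε]
    simp only [PiLp.sub_apply, abs_sub_comm]
  rw [setOf_mem_smootherSupp Ψ H q h hε.le u Z k hv hqv,
    hZindep.meas_biInter fun i _ => ⟨_, measurableSet_supClosedBall _ _, rfl⟩,
    Finset.prod_congr rfl fun i _ => hobs i,
    ENNReal.ofReal_prod_of_nonneg fun i _ => Finset.prod_nonneg fun j _ => le_max_left _ _]

/-- exact formula for the probability that a fixed point `v ∈ B_R`
(with `q(v) > 0`) belongs to the support of the smoother, for uniform
observation noise on `[-ε, ε]^{d_o}`. -/
theorem prob_in_smoother_support {d dO : ℕ}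
    (A : EuclideanSpace ℝ (Fin d) →L[ℝ] EuclideanSpace ℝ (Fin d))
    (B : EuclideanSpace ℝ (Fin d) →L[ℝ] EuclideanSpace ℝ (Fin d) →L[ℝ] EuclideanSpace ℝ (Fin d))
    (f : EuclideanSpace ℝ (Fin d))
    (R δ : ℝ) (hR : 0 < R) (hδ : 0 < δ)
    (htrap : ∀ x : EuclideanSpace ℝ (Fin d),
      ‖x‖ ∈ Icc R (R + δ) → (inner ℝ (f - A x - B x x) x : ℝ) ≤ 0)
    (Ψ : ℝ → EuclideanSpace ℝ (Fin d) → EuclideanSpace ℝ (Fin d))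
    (hΨ0 : ∀ x, ‖x‖ ≤ R → Ψ 0 x = x)
    (hΨR : ∀ x, ‖x‖ ≤ R → ∀ t : ℝ, 0 ≤ t → ‖Ψ t x‖ ≤ R)
    (hΨode : ∀ x, ‖x‖ ≤ R → ∀ t : ℝ, 0 ≤ t →
      HasDerivWithinAt (fun s => Ψ s x)
        (f - A (Ψ t x) - B (Ψ t x) (Ψ t x)) (Ici 0) t)
    (h : ℝ) (hh : 0 < h)
    (H : EuclideanSpace ℝ (Fin d) →L[ℝ] EuclideanSpace ℝ (Fin dO))
    (ε : ℝ) (hε : 0 < ε)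
    (Ω : Type*) [MeasurableSpace Ω] (μ : Measure Ω) [IsProbabilityMeasure μ]
    (Z : ℕ → Ω → EuclideanSpace ℝ (Fin dO))
    (hZmeas : ∀ i, Measurable (Z i))
    (hZindep : iIndepFun Z μ)
    (hZlaw : ∀ i, Measure.map (Z i) μ =
      (ENNReal.ofReal ((2 * ε) ^ dO))⁻¹ •
        volume.restrict {z : EuclideanSpace ℝ (Fin dO) | ∀ j, |z j| ≤ ε})
    (q : EuclideanSpace ℝ (Fin d) → ℝ) (hq : ∀ x, 0 ≤ q x)
    (hqsupp : ∀ x : EuclideanSpace ℝ (Fin d), ¬ ‖x‖ ≤ R → q x = 0)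
    (u : EuclideanSpace ℝ (Fin d)) (hu : ‖u‖ ≤ R) (hqu : 0 < q u)
    (v : EuclideanSpace ℝ (Fin d)) (hv : ‖v‖ ≤ R) (hqv : 0 < q v)
    (k : ℕ) :
    μ {ω | v ∈ smootherSupp Ψ H q R h ε u Z k ω} =
      ENNReal.ofReal (∏ i ∈ Finset.range (k + 1), ∏ j : Fin dO,
        max 0 (1 - |H (Ψ (i * h) u) j - H (Ψ (i * h) v) j| / (2 * ε))) :=
  prob_in_smoother_support_general R Ψ h H ε hε Ω μ Z hZmeas hZindep hZlaw q u v hv hqv k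
end
end

section
/- Suppose ‖H‖₁ > 0 and that for the initial position u ∈ B_R there are anti-leaf sets Ũ(u,k) ⊆ B_R, k ∈ ℕ, such that {‖Ψ_{t_k}(v) − Ψ_{t_k}(u)‖₁ : v ∈ Ũ(u,k)} = [0, d̃_max(u,k)], and for every v ∈ Ũ(u,k), ∑_{i=0}^{k} ‖Ψ_{t_i}(v) − Ψ_{t_i}(u)‖₁ ≤ C̃(u,k)·‖Ψ_{t_k}(v) − Ψ_{t_k}(u)‖₁, for some constants C̃(u,k) and d̃_max(u,k). Suppose further there is a strictly increasing sequence of indices i₁ < i₂ < … and constants C̃(u) < ∞, d̃_max(u) > 0 such that C̃(u,i_j) ≤ C̃(u) and d̃_max(u,i_j) ≥ d̃_max(u) for every j. Suppose q(u) > 0 and q(v) > 0 for every v ∈ ∪_{k∈ℕ} Ũ(u,k). Then for every ε with 0 < ε ≤ d̃_max(u)·C̃(u)·‖H‖₁ and every j ≥ 1, the expected ℓ¹-diameter of the support of the filter satisfies E[diam₁({Ψ_{t_{i_j}}(v) : v ∈ S_{i_j}})] ≥ (1/e)·ε/(C̃(u)·‖H‖₁). -/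
open MeasureTheory ProbabilityTheory Set
open scoped ENNReal

noncomputable section

/-- The operator norm induced by the ℓ¹ norms. -/
def opNorm1 {n m : ℕ} (T : EuclideanSpace ℝ (Fin n) → EuclideanSpace ℝ (Fin m)) : ℝ :=
  sSup ((fun x => norm1 (T x)) '' {x | norm1 x ≤ 1})

/-- The ℓ¹ diameter of a set. -/
def diam1 {n : ℕ} (S : Set (EuclideanSpace ℝ (Fin n))) : ℝ :=
  sSup ((fun p : EuclideanSpace ℝ (Fin n) × EuclideanSpace ℝ (Fin n) =>
    norm1 (p.1 - p.2)) '' (S ×ˢ S))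

/-!
Choose `v ∈ Ũ(u, k)` with `‖Ψ_{t_k} v - Ψ_{t_k} u‖₁ = r := ε / (C̃ ‖H‖₁)`. By the anti-leaf
inequality the observation shifts `aᵢ := H Ψ_{t_i} v - H Ψ_{t_i} u`, `i ≤ k`, satisfy
`∑ᵢ ‖aᵢ‖₁ ≤ ‖H‖₁ C̃ r = ε`. Whenever every noise value `Zᵢ` lies both in the cube `[-ε, ε]^{d_o}`
and in its translate by `aᵢ`, the data are explained by `v` as well as by `u`, so the filter
support has ℓ¹-diameter at least `r`. For independent uniform noise this event has probability
`∏ᵢⱼ (1 - |aᵢⱼ| / 2ε) ≥ 1 - ∑ᵢ ‖aᵢ‖₁ / 2ε ≥ 1/2`, so the expected diameter is at least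
`r / 2 ≥ r / e`.
-/

section NormOne

variable {n m : ℕ}

lemma norm1_nonneg (x : EuclideanSpace ℝ (Fin n)) : 0 ≤ norm1 x :=
  Finset.sum_nonneg fun _ _ => abs_nonneg _

lemma abs_apply_le_norm1 (x : EuclideanSpace ℝ (Fin n)) (j : Fin n) : |x j| ≤ norm1 x :=
  Finset.single_le_sum (f := fun j => |x j|) (fun _ _ => abs_nonneg _) (Finset.mem_univ j)

lemma norm1_smul (c : ℝ) (x : EuclideanSpace ℝ (Fin n)) : norm1 (c • x) = |c| * norm1 x := by
  simp [norm1, abs_mul, Finset.mul_sum]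

lemma norm1_le_card_mul_norm (x : EuclideanSpace ℝ (Fin n)) : norm1 x ≤ n * ‖x‖ :=
  calc norm1 x ≤ ∑ _j : Fin n, ‖x‖ := Finset.sum_le_sum fun j _ => PiLp.norm_apply_le x j
    _ = n * ‖x‖ := by simp

lemma norm_le_norm1 (x : EuclideanSpace ℝ (Fin n)) : ‖x‖ ≤ norm1 x := by
  rw [EuclideanSpace.norm_eq, ← abs_of_nonneg (norm1_nonneg x), ← Real.sqrt_sq_eq_abs]
  exact Real.sqrt_le_sqrt (Finset.sum_sq_le_sq_sum_of_nonneg fun _ _ => norm_nonneg _)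

lemma opNorm1_nonneg (T : EuclideanSpace ℝ (Fin n) → EuclideanSpace ℝ (Fin m)) :
    0 ≤ opNorm1 T :=
  Real.sSup_nonneg (by rintro _ ⟨x, -, rfl⟩; exact norm1_nonneg _)

lemma norm1_apply_le_opNorm1 (H : EuclideanSpace ℝ (Fin n) →L[ℝ] EuclideanSpace ℝ (Fin m))
    {x : EuclideanSpace ℝ (Fin n)} (hx : norm1 x ≤ 1) :
    norm1 (H x) ≤ opNorm1 (fun y : EuclideanSpace ℝ (Fin n) => H y) := by
  refine le_csSup ⟨m * ‖H‖, ?_⟩ ⟨x, hx, rfl⟩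
  rintro _ ⟨y, hy, rfl⟩
  calc norm1 (H y) ≤ m * ‖H y‖ := norm1_le_card_mul_norm _
    _ ≤ m * (‖H‖ * 1) := by gcongr; exact H.le_opNorm_of_le ((norm_le_norm1 y).trans hy)
    _ = m * ‖H‖ := by rw [mul_one]

lemma norm1_apply_le (H : EuclideanSpace ℝ (Fin n) →L[ℝ] EuclideanSpace ℝ (Fin m))
    (x : EuclideanSpace ℝ (Fin n)) :
    norm1 (H x) ≤ opNorm1 (fun y : EuclideanSpace ℝ (Fin n) => H y) * norm1 x := by
  rcases (norm1_nonneg x).eq_or_lt with hx | hx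
  · rw [norm_le_zero_iff.1 ((norm_le_norm1 x).trans hx.ge), map_zero]
    simp [norm1]
  · have hunit : norm1 ((norm1 x)⁻¹ • x) ≤ 1 := by
      rw [norm1_smul, abs_of_pos (inv_pos.2 hx), inv_mul_cancel₀ hx.ne']
    calc norm1 (H x) = norm1 x * norm1 (H ((norm1 x)⁻¹ • x)) := by
          rw [map_smul, norm1_smul, abs_of_pos (inv_pos.2 hx), mul_inv_cancel_left₀ hx.ne']
      _ ≤ norm1 x * opNorm1 (fun y : EuclideanSpace ℝ (Fin n) => H y) := by
          gcongr; exact norm1_apply_le_opNorm1 H hunit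
      _ = _ := mul_comm _ _

lemma norm1_sub_le_diam1 {R : ℝ} {S : Set (EuclideanSpace ℝ (Fin n))} (hS : ∀ x ∈ S, ‖x‖ ≤ R)
    {x y : EuclideanSpace ℝ (Fin n)} (hx : x ∈ S) (hy : y ∈ S) : norm1 (x - y) ≤ diam1 S := by
  refine le_csSup ⟨n * (R + R), ?_⟩ ⟨(x, y), ⟨hx, hy⟩, rfl⟩
  rintro _ ⟨⟨a, b⟩, ⟨ha, hb⟩, rfl⟩
  calc norm1 (a - b) ≤ n * ‖a - b‖ := norm1_le_card_mul_norm _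
    _ ≤ n * (R + R) := by gcongr; exact (norm_sub_le a b).trans (add_le_add (hS a ha) (hS b hb))

lemma normInf_le {x : EuclideanSpace ℝ (Fin n)} {c : ℝ} (hc : 0 ≤ c) (h : ∀ j, |x j| ≤ c) :
    normInf x ≤ c :=
  Real.iSup_le h hc

end NormOne

lemma one_sub_sum_le_prod_one_sub {ι : Type*} (s : Finset ι) (p : ι → ℝ)
    (h0 : ∀ i ∈ s, 0 ≤ p i) (h1 : ∀ i ∈ s, p i ≤ 1) :
    1 - ∑ i ∈ s, p i ≤ ∏ i ∈ s, (1 - p i) := by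
  induction s using Finset.cons_induction with
  | empty => simp
  | cons a s ha ih =>
    rw [Finset.prod_cons, Finset.sum_cons]
    have ih := ih (fun i hi => h0 i (Finset.mem_cons_of_mem hi))
      (fun i hi => h1 i (Finset.mem_cons_of_mem hi))
    have hpa0 := h0 a (Finset.mem_cons_self a s)
    have hpa1 := h1 a (Finset.mem_cons_self a s)
    have hsum0 : 0 ≤ ∑ i ∈ s, p i :=
      Finset.sum_nonneg fun i hi => h0 i (Finset.mem_cons_of_mem hi)
    nlinarith [mul_le_mul_of_nonneg_left ih (sub_nonneg.2 hpa1)]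

section OverlapBox

variable {m : ℕ} {ε : ℝ} {a : EuclideanSpace ℝ (Fin m)}

/-- The noise values `z` that keep an observation `y + z` within sup-distance `ε` of both `y`
and `y + a`. -/
def overlapBox (ε : ℝ) (a : EuclideanSpace ℝ (Fin m)) : Set (EuclideanSpace ℝ (Fin m)) :=
  {z | ∀ j, |z j| ≤ ε ∧ |a j - z j| ≤ ε}

lemma overlapBox_eq_preimage_pi (ε : ℝ) (a : EuclideanSpace ℝ (Fin m)) :
    overlapBox ε a =
      WithLp.ofLp ⁻¹' Set.univ.pi fun j => Icc (max (-ε) (a j - ε)) (min ε (a j + ε)) := by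
  ext z
  simp only [overlapBox, mem_ofPred_eq, mem_preimage, mem_univ_pi, mem_Icc, abs_le, max_le_iff,
    le_min_iff]
  refine forall_congr' fun j => ?_
  constructor <;> rintro ⟨⟨_, _⟩, _, _⟩ <;> refine ⟨⟨?_, ?_⟩, ?_, ?_⟩ <;> linarith

lemma measurableSet_overlapBox : MeasurableSet (overlapBox ε a) := by
  rw [overlapBox_eq_preimage_pi]
  exact (PiLp.volume_preserving_ofLp (Fin m)).measurable
    (MeasurableSet.univ_pi fun _ => measurableSet_Icc)

lemma overlapBox_subset_cube : overlapBox ε a ⊆ {z | ∀ j, |z j| ≤ ε} :=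
  fun _ hz j => (hz j).1

lemma min_sub_max_eq_two_mul_sub_abs (ε x : ℝ) :
    min ε (x + ε) - max (-ε) (x - ε) = 2 * ε - |x| := by
  rcases le_total x 0 with hx | hx
  · rw [abs_of_nonpos hx, min_eq_right (by linarith), max_eq_left (by linarith)]; ring
  · rw [abs_of_nonneg hx, min_eq_left (by linarith), max_eq_right (by linarith)]; ring

lemma volume_overlapBox (ha : ∀ j, |a j| ≤ 2 * ε) :
    volume (overlapBox ε a) = ENNReal.ofReal (∏ j, (2 * ε - |a j|)) := by
  rw [overlapBox_eq_preimage_pi, (PiLp.volume_preserving_ofLp (Fin m)).measure_preimage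
      (MeasurableSet.univ_pi fun _ => measurableSet_Icc).nullMeasurableSet, volume_pi_pi,
    ENNReal.ofReal_prod_of_nonneg fun j _ => sub_nonneg.2 (ha j)]
  exact Finset.prod_congr rfl fun j _ => by rw [Real.volume_Icc, min_sub_max_eq_two_mul_sub_abs]

lemma measure_preimage_overlapBox {Ω : Type*} [MeasurableSpace Ω] {μ : Measure Ω}
    {Z : Ω → EuclideanSpace ℝ (Fin m)} (hε : 0 < ε) (hZ : Measurable Z)
    (hlaw : μ.map Z = (ENNReal.ofReal ((2 * ε) ^ m))⁻¹ •
      volume.restrict {z : EuclideanSpace ℝ (Fin m) | ∀ j, |z j| ≤ ε})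
    (ha : ∀ j, |a j| ≤ 2 * ε) :
    μ (Z ⁻¹' overlapBox ε a) = ENNReal.ofReal (∏ j, (1 - |a j| / (2 * ε))) := by
  rw [← Measure.map_apply hZ measurableSet_overlapBox, hlaw, Measure.smul_apply,
    Measure.restrict_apply measurableSet_overlapBox,
    inter_eq_self_of_subset_left overlapBox_subset_cube, volume_overlapBox ha, smul_eq_mul,
    ← ENNReal.ofReal_inv_of_pos (by positivity), ← ENNReal.ofReal_mul (by positivity)]
  congr 1
  have hfactor : ∀ j, 1 - |a j| / (2 * ε) = (2 * ε)⁻¹ * (2 * ε - |a j|) := fun j => by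
    field_simp
  rw [Finset.prod_congr rfl fun j _ => hfactor j, Finset.prod_mul_distrib, Finset.prod_const,
    Finset.card_univ, Fintype.card_fin, inv_pow]

lemma one_sub_sum_div_le_measure_iInter_overlapBox {Ω ι : Type*} [MeasurableSpace Ω]
    {μ : Measure Ω} {Z : ι → Ω → EuclideanSpace ℝ (Fin m)} (hε : 0 < ε)
    (hZmeas : ∀ i, Measurable (Z i)) (hZindep : iIndepFun Z μ)
    (hZlaw : ∀ i, μ.map (Z i) = (ENNReal.ofReal ((2 * ε) ^ m))⁻¹ •
      volume.restrict {z : EuclideanSpace ℝ (Fin m) | ∀ j, |z j| ≤ ε})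
    (s : Finset ι) (a : ι → EuclideanSpace ℝ (Fin m)) (ha : ∀ i ∈ s, ∀ j, |a i j| ≤ 2 * ε) :
    ENNReal.ofReal (1 - (∑ i ∈ s, norm1 (a i)) / (2 * ε)) ≤
      μ (⋂ i ∈ s, Z i ⁻¹' overlapBox ε (a i)) := by
  have hdefect : ∀ i ∈ s, ∀ j, |a i j| / (2 * ε) ≤ 1 := fun i hi j =>
    (div_le_one (by positivity)).2 (ha i hi j)
  rw [hZindep.measure_inter_preimage_eq_mul s fun i _ => measurableSet_overlapBox,
    Finset.prod_congr rfl fun i hi =>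
      measure_preimage_overlapBox hε (hZmeas i) (hZlaw i) (ha i hi),
    ← ENNReal.ofReal_prod_of_nonneg fun i hi =>
      Finset.prod_nonneg fun j _ => sub_nonneg.2 (hdefect i hi j)]
  apply ENNReal.ofReal_le_ofReal
  have hweierstrass := one_sub_sum_le_prod_one_sub (s ×ˢ Finset.univ)
    (fun p => |a p.1 p.2| / (2 * ε)) (fun _ _ => by positivity)
    (fun p hp => hdefect p.1 (Finset.mem_product.1 hp).1 p.2)
  rw [Finset.prod_product, Finset.sum_product] at hweierstrass
  simpa only [norm1, Finset.sum_div] using hweierstrass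

end OverlapBox

lemma mul_measure_le_lintegral_of_le_on {Ω : Type*} [MeasurableSpace Ω] {μ : Measure Ω}
    {f : Ω → ℝ≥0∞} {E : Set Ω} {c : ℝ≥0∞} (hE : MeasurableSet E) (hf : ∀ ω ∈ E, c ≤ f ω) :
    c * μ E ≤ ∫⁻ ω, f ω ∂μ :=
  calc c * μ E = ∫⁻ _ in E, c ∂μ := (setLIntegral_const E c).symm
    _ ≤ ∫⁻ ω in E, f ω ∂μ := setLIntegral_mono' hE hf
    _ ≤ ∫⁻ ω, f ω ∂μ := setLIntegral_le_lintegral E f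

section Smoother

variable {d dO : ℕ} {Ω : Type*} {Ψ : ℝ → EuclideanSpace ℝ (Fin d) → EuclideanSpace ℝ (Fin d)}
  {H : EuclideanSpace ℝ (Fin d) →L[ℝ] EuclideanSpace ℝ (Fin dO)}
  {q : EuclideanSpace ℝ (Fin d) → ℝ} {R h ε : ℝ} {u v : EuclideanSpace ℝ (Fin d)}
  {Z : ℕ → Ω → EuclideanSpace ℝ (Fin dO)} {k : ℕ}

lemma mem_smootherSupp {x : EuclideanSpace ℝ (Fin d)} {ω : Ω} (hx : ‖x‖ ≤ R) (hqx : 0 < q x)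
    (hε : 0 ≤ ε) (hZ : ∀ i ≤ k, ∀ j, |(H (Ψ (i * h) x) - H (Ψ (i * h) u)) j - Z i ω j| ≤ ε) :
    x ∈ smootherSupp Ψ H q R h ε u Z k ω :=
  ⟨hx, hqx, fun i hi => normInf_le hε fun j => by
    simpa only [sub_add_eq_sub_sub, PiLp.sub_apply] using hZ i hi j⟩

theorem ofReal_half_le_lintegral_diam1 [MeasurableSpace Ω] {μ : Measure Ω} (hε : 0 < ε)
    (hZmeas : ∀ i, Measurable (Z i)) (hZindep : iIndepFun Z μ)
    (hZlaw : ∀ i, μ.map (Z i) = (ENNReal.ofReal ((2 * ε) ^ dO))⁻¹ •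
      volume.restrict {z : EuclideanSpace ℝ (Fin dO) | ∀ j, |z j| ≤ ε})
    (hΨR : ∀ x, ‖x‖ ≤ R → ‖Ψ (k * h) x‖ ≤ R)
    (hu : ‖u‖ ≤ R) (hqu : 0 < q u) (hv : ‖v‖ ≤ R) (hqv : 0 < q v)
    (hsum : ∑ i ∈ Finset.range (k + 1), norm1 (H (Ψ (i * h) v) - H (Ψ (i * h) u)) ≤ ε) :
    ENNReal.ofReal (norm1 (Ψ (k * h) v - Ψ (k * h) u) / 2) ≤
      ∫⁻ ω, ENNReal.ofReal (diam1 (Ψ (k * h) '' smootherSupp Ψ H q R h ε u Z k ω)) ∂μ := by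
  set a : ℕ → EuclideanSpace ℝ (Fin dO) := fun i => H (Ψ (i * h) v) - H (Ψ (i * h) u)
  set E := ⋂ i ∈ Finset.range (k + 1), Z i ⁻¹' overlapBox ε (a i)
  have ha : ∀ i ∈ Finset.range (k + 1), ∀ j, |a i j| ≤ 2 * ε := fun i hi j =>
    calc |a i j| ≤ norm1 (a i) := abs_apply_le_norm1 _ _
      _ ≤ ∑ i ∈ Finset.range (k + 1), norm1 (a i) :=
        Finset.single_le_sum (fun _ _ => norm1_nonneg _) hi
      _ ≤ 2 * ε := by linarith
  have hμE : ENNReal.ofReal (1 / 2) ≤ μ E := by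
    refine le_trans (ENNReal.ofReal_le_ofReal ?_)
      (one_sub_sum_div_le_measure_iInter_overlapBox hε hZmeas hZindep hZlaw _ a ha)
    rw [le_sub_comm, div_le_iff₀ (by positivity)]
    linarith
  have hdiam : ∀ ω ∈ E, ENNReal.ofReal (norm1 (Ψ (k * h) v - Ψ (k * h) u)) ≤
      ENNReal.ofReal (diam1 (Ψ (k * h) '' smootherSupp Ψ H q R h ε u Z k ω)) := by
    intro ω hω
    have hZω : ∀ i ≤ k, Z i ω ∈ overlapBox ε (a i) := fun i hi =>
      mem_iInter₂.1 hω i (Finset.mem_range_succ_iff.2 hi)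
    have hvS := mem_smootherSupp hv hqv hε.le fun i hi j => (hZω i hi j).2
    have huS : u ∈ smootherSupp Ψ H q R h ε u Z k ω :=
      mem_smootherSupp hu hqu hε.le fun i hi j => by simpa using (hZω i hi j).1
    refine ENNReal.ofReal_le_ofReal (norm1_sub_le_diam1 (R := R) ?_ (mem_image_of_mem _ hvS)
      (mem_image_of_mem _ huS))
    rintro _ ⟨x, hx, rfl⟩
    exact hΨR x hx.1
  have hE : MeasurableSet E :=
    Finset.measurableSet_biInter _ fun i _ => hZmeas i measurableSet_overlapBox
  calc ENNReal.ofReal (norm1 (Ψ (k * h) v - Ψ (k * h) u) / 2)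
      = ENNReal.ofReal (norm1 (Ψ (k * h) v - Ψ (k * h) u)) * ENNReal.ofReal (1 / 2) := by
        rw [← ENNReal.ofReal_mul (norm1_nonneg _), mul_one_div]
    _ ≤ ENNReal.ofReal (norm1 (Ψ (k * h) v - Ψ (k * h) u)) * μ E := by gcongr
    _ ≤ _ := mul_measure_le_lintegral_of_le_on hE hdiam

end Smoother

/-- The support of the filter after `k+1` observations is the image of the support of the
smoother under `Ψ_{t_k}`. -/
theorem expected_diam_filter_lower_bound_general {d dO : ℕ}
    (R : ℝ)
    (Ψ : ℝ → EuclideanSpace ℝ (Fin d) → EuclideanSpace ℝ (Fin d))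
    (hΨR : ∀ x, ‖x‖ ≤ R → ∀ t : ℝ, 0 ≤ t → ‖Ψ t x‖ ≤ R)
    (h : ℝ) (hh : 0 < h)
    (H : EuclideanSpace ℝ (Fin d) →L[ℝ] EuclideanSpace ℝ (Fin dO))
    (ε : ℝ) (hε : 0 < ε)
    (Ω : Type*) [MeasurableSpace Ω] (μ : Measure Ω)
    (Z : ℕ → Ω → EuclideanSpace ℝ (Fin dO))
    (hZmeas : ∀ i, Measurable (Z i))
    (hZindep : iIndepFun Z μ)
    (hZlaw : ∀ i, Measure.map (Z i) μ =
      (ENNReal.ofReal ((2 * ε) ^ dO))⁻¹ •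
        volume.restrict {z : EuclideanSpace ℝ (Fin dO) | ∀ j, |z j| ≤ ε})
    (q : EuclideanSpace ℝ (Fin d) → ℝ)
    (u : EuclideanSpace ℝ (Fin d)) (hu : ‖u‖ ≤ R) (hqu : 0 < q u)
    -- Assumption 3 (anti-leaf sets):
    (Ut : ℕ → Set (EuclideanSpace ℝ (Fin d)))
    (hUtsub : ∀ k : ℕ, Ut k ⊆ {x : EuclideanSpace ℝ (Fin d) | ‖x‖ ≤ R})
    (dmaxk : ℕ → ℝ) (Ck : ℕ → ℝ)
    (hUtrange : ∀ k : ℕ,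
      (fun v => norm1 (Ψ (k * h) v - Ψ (k * h) u)) '' (Ut k) = Icc 0 (dmaxk k))
    (hCk : ∀ k : ℕ, ∀ v ∈ Ut k,
      ∑ i ∈ Finset.range (k + 1), norm1 (Ψ (i * h) v - Ψ (i * h) u) ≤
        Ck k * norm1 (Ψ (k * h) v - Ψ (k * h) u))
    (idx : ℕ → ℕ)
    (Ct dt : ℝ) (hdt : 0 < dt)
    (hCtb : ∀ j : ℕ, Ck (idx j) ≤ Ct) (hdtb : ∀ j : ℕ, dt ≤ dmaxk (idx j))
    (hqUt : ∀ v ∈ ⋃ k : ℕ, Ut k, 0 < q v)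
    (hεub : ε ≤ dt * Ct * opNorm1 (fun x : EuclideanSpace ℝ (Fin d) => H x)) :
    ∀ j : ℕ,
      ENNReal.ofReal ((1 / Real.exp 1) *
          ε / (Ct * opNorm1 (fun x : EuclideanSpace ℝ (Fin d) => H x))) ≤
        ∫⁻ ω, ENNReal.ofReal (diam1
            (Ψ (idx j * h) '' smootherSupp Ψ H q R h ε u Z (idx j) ω)) ∂μ := by
  intro j
  set N := opNorm1 (fun x : EuclideanSpace ℝ (Fin d) => H x)
  have hCtN : 0 < Ct * N := pos_of_mul_pos_right (by rw [← mul_assoc]; linarith) hdt.le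
  set r := ε / (Ct * N)
  have hr : 0 ≤ r := (div_pos hε hCtN).le
  obtain ⟨v, hvU, hvr⟩ : ∃ v ∈ Ut (idx j), norm1 (Ψ (idx j * h) v - Ψ (idx j * h) u) = r := by
    have hr_mem : r ∈ Icc 0 (dmaxk (idx j)) :=
      ⟨hr, ((div_le_iff₀ hCtN).2 (by rw [← mul_assoc]; exact hεub)).trans (hdtb j)⟩
    rw [← hUtrange] at hr_mem
    exact hr_mem
  have hsum : ∑ i ∈ Finset.range (idx j + 1),
      norm1 (H (Ψ (i * h) v) - H (Ψ (i * h) u)) ≤ ε :=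
    calc _ ≤ ∑ i ∈ Finset.range (idx j + 1), N * norm1 (Ψ (i * h) v - Ψ (i * h) u) :=
          Finset.sum_le_sum fun i _ => by rw [← map_sub]; exact norm1_apply_le H _
      _ ≤ N * (Ct * r) := by
          rw [← Finset.mul_sum]
          refine mul_le_mul_of_nonneg_left ((hCk _ v hvU).trans ?_) (opNorm1_nonneg _)
          rw [hvr]
          exact mul_le_mul_of_nonneg_right (hCtb j) hr
      _ = ε := by rw [← mul_assoc, mul_comm N Ct]; exact mul_div_cancel₀ ε hCtN.ne'
  have hhalf := ofReal_half_le_lintegral_diam1 hε hZmeas hZindep hZlaw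
    (fun x hx => hΨR x hx _ (by positivity)) hu hqu (hUtsub _ hvU)
    (hqUt v (mem_iUnion_of_mem _ hvU)) hsum
  refine le_trans (ENNReal.ofReal_le_ofReal ?_) (hvr ▸ hhalf)
  have hexp : 2 ≤ Real.exp 1 := by linarith [Real.add_one_le_exp 1]
  calc 1 / Real.exp 1 * ε / (Ct * N) = r / Real.exp 1 := by ring
    _ ≤ r / 2 := div_le_div_of_nonneg_left hr two_pos hexp

/-- lower bound on the expected ℓ¹-diameter of the support of the
filter under the anti-leaf-set assumption, for uniform observation noise.  The
support of the filter after `k+1` observations is the image of the support of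
the smoother under `Ψ_{t_k}`. -/
theorem expected_diam_filter_lower_bound {d dO : ℕ}
    (A : EuclideanSpace ℝ (Fin d) →L[ℝ] EuclideanSpace ℝ (Fin d))
    (B : EuclideanSpace ℝ (Fin d) →L[ℝ] EuclideanSpace ℝ (Fin d) →L[ℝ] EuclideanSpace ℝ (Fin d))
    (f : EuclideanSpace ℝ (Fin d))
    (R δ : ℝ) (hR : 0 < R) (hδ : 0 < δ)
    (htrap : ∀ x : EuclideanSpace ℝ (Fin d),
      ‖x‖ ∈ Icc R (R + δ) → (inner ℝ (f - A x - B x x) x : ℝ) ≤ 0)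
    (Ψ : ℝ → EuclideanSpace ℝ (Fin d) → EuclideanSpace ℝ (Fin d))
    (hΨ0 : ∀ x, ‖x‖ ≤ R → Ψ 0 x = x)
    (hΨR : ∀ x, ‖x‖ ≤ R → ∀ t : ℝ, 0 ≤ t → ‖Ψ t x‖ ≤ R)
    (hΨode : ∀ x, ‖x‖ ≤ R → ∀ t : ℝ, 0 ≤ t →
      HasDerivWithinAt (fun s => Ψ s x)
        (f - A (Ψ t x) - B (Ψ t x) (Ψ t x)) (Ici 0) t)
    (h : ℝ) (hh : 0 < h)
    (H : EuclideanSpace ℝ (Fin d) →L[ℝ] EuclideanSpace ℝ (Fin dO))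
    (hH : 0 < opNorm1 (fun x : EuclideanSpace ℝ (Fin d) => H x))
    (ε : ℝ) (hε : 0 < ε)
    (Ω : Type*) [MeasurableSpace Ω] (μ : Measure Ω) [IsProbabilityMeasure μ]
    (Z : ℕ → Ω → EuclideanSpace ℝ (Fin dO))
    (hZmeas : ∀ i, Measurable (Z i))
    (hZindep : iIndepFun Z μ)
    (hZlaw : ∀ i, Measure.map (Z i) μ =
      (ENNReal.ofReal ((2 * ε) ^ dO))⁻¹ •
        volume.restrict {z : EuclideanSpace ℝ (Fin dO) | ∀ j, |z j| ≤ ε})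
    (q : EuclideanSpace ℝ (Fin d) → ℝ) (hq : ∀ x, 0 ≤ q x)
    (hqsupp : ∀ x : EuclideanSpace ℝ (Fin d), ¬ ‖x‖ ≤ R → q x = 0)
    (u : EuclideanSpace ℝ (Fin d)) (hu : ‖u‖ ≤ R) (hqu : 0 < q u)
    -- Assumption 3 (anti-leaf sets):
    (Ut : ℕ → Set (EuclideanSpace ℝ (Fin d)))
    (hUtsub : ∀ k : ℕ, Ut k ⊆ {x : EuclideanSpace ℝ (Fin d) | ‖x‖ ≤ R})
    (dmaxk : ℕ → ℝ) (Ck : ℕ → ℝ)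
    (hUtrange : ∀ k : ℕ,
      (fun v => norm1 (Ψ (k * h) v - Ψ (k * h) u)) '' (Ut k) = Icc 0 (dmaxk k))
    (hCk : ∀ k : ℕ, ∀ v ∈ Ut k,
      ∑ i ∈ Finset.range (k + 1), norm1 (Ψ (i * h) v - Ψ (i * h) u) ≤
        Ck k * norm1 (Ψ (k * h) v - Ψ (k * h) u))
    (idx : ℕ → ℕ) (hidx : StrictMono idx)
    (Ct dt : ℝ) (hdt : 0 < dt)
    (hCtb : ∀ j : ℕ, Ck (idx j) ≤ Ct) (hdtb : ∀ j : ℕ, dt ≤ dmaxk (idx j))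
    (hqUt : ∀ v ∈ ⋃ k : ℕ, Ut k, 0 < q v)
    (hεub : ε ≤ dt * Ct * opNorm1 (fun x : EuclideanSpace ℝ (Fin d) => H x)) :
    ∀ j : ℕ,
      ENNReal.ofReal ((1 / Real.exp 1) *
          ε / (Ct * opNorm1 (fun x : EuclideanSpace ℝ (Fin d) => H x))) ≤
        ∫⁻ ω, ENNReal.ofReal (diam1
            (Ψ (idx j * h) '' smootherSupp Ψ H q R h ε u Z (idx j) ω)) ∂μ :=
  expected_diam_filter_lower_bound_general R Ψ hΨR h hh H ε hε Ω μ Z hZmeas hZindep hZlaw q u hu hqu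
    Ut hUtsub dmaxk Ck hUtrange hCk idx Ct dt hdt hCtb hdtb hqUt hεub
end
end

section
/- Let Φ_t(v) := H Ψ_t(v), fix k ∈ ℕ and u ∈ B_R, and suppose there is c > 0 such that max_{0≤i≤k} ‖Φ_{t_i}(u) − Φ_{t_i}(v)‖ ≥ c·‖v − u‖ for every v ∈ B_R. Let Z_0, …, Z_k be random vectors in ℝ^{d_o} with E‖Z_i‖² ≤ σ_Z² < ∞ for each i, and Y_i := Φ_{t_i}(u) + Z_i. Then any random variable U taking values in B_R that satisfies max_{0≤i≤k} ‖Φ_{t_i}(U) − Y_i‖ ≤ max_{0≤i≤k} ‖Φ_{t_i}(u) − Y_i‖ almost surely (in particular, any minimizer over B_R of v ↦ max_{0≤i≤k} ‖Φ_{t_i}(v) − Y_i‖) satisfies E‖U − u‖² ≤ (4(k+1)/c²)·σ_Z², and moreover E‖Ψ_{t_k}(U) − Ψ_{t_k}(u)‖² ≤ (4(k+1)/c²)·exp(2G·t_k)·σ_Z², where G := ‖A‖ + 2‖B‖R. -/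
/-!
The stability assumption gives an index `i ≤ k` with
`c ‖U - u‖ ≤ ‖Φ_i(u) - Φ_i(U)‖ ≤ ‖Φ_i(u) - Y_i‖ + ‖Φ_i(U) - Y_i‖ ≤ 2 max_j ‖Z_j‖`,
since `Φ_j(u) - Y_j = -Z_j` and `U` does at least as well as `u`. Squaring,
`‖U - u‖² ≤ (4 / c²) ∑_j ‖Z_j‖²`, and integrating gives the first bound. On `B_R` the vector
field `v ↦ f - A v - B(v, v)` is `G`-Lipschitz, so Grönwall's inequality for two trajectories
staying in `B_R` gives `‖Ψ_t(U) - Ψ_t(u)‖ ≤ e^{G t} ‖U - u‖`, whence the second bound.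
-/

open MeasureTheory Set
open scoped ENNReal

section Flow

variable {E : Type*} [NormedAddCommGroup E] [NormedSpace ℝ E]

theorem norm_bilin_self_sub_bilin_self_le
    (B : E →L[ℝ] E →L[ℝ] E) (x y : E) :
    ‖B x x - B y y‖ ≤ ‖B‖ * (‖x‖ + ‖y‖) * ‖x - y‖ := by
  have hsplit : B x x - B y y = B (x - y) x + B y (x - y) := by
    simp only [map_sub, sub_apply]
    abel
  calc ‖B x x - B y y‖ ≤ ‖B (x - y) x‖ + ‖B y (x - y)‖ := hsplit ▸ norm_add_le _ _
    _ ≤ ‖B‖ * ‖x - y‖ * ‖x‖ + ‖B‖ * ‖y‖ * ‖x - y‖ :=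
      add_le_add (B.le_opNorm₂ _ _) (B.le_opNorm₂ _ _)
    _ = ‖B‖ * (‖x‖ + ‖y‖) * ‖x - y‖ := by ring

theorem lipschitzOnWith_quadratic_field
    (A : E →L[ℝ] E) (B : E →L[ℝ] E →L[ℝ] E) (f : E) (R : ℝ) :
    LipschitzOnWith (‖A‖ + 2 * ‖B‖ * R).toNNReal (fun x => f - A x - B x x)
      (Metric.closedBall 0 R) := by
  refine LipschitzOnWith.of_dist_le' fun x hx y hy => ?_
  rw [mem_closedBall_zero_iff] at hx hy
  have hB : ‖B x x - B y y‖ ≤ 2 * ‖B‖ * R * ‖x - y‖ :=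
    calc ‖B x x - B y y‖ ≤ ‖B‖ * (‖x‖ + ‖y‖) * ‖x - y‖ :=
          norm_bilin_self_sub_bilin_self_le B x y
      _ ≤ ‖B‖ * (R + R) * ‖x - y‖ := by gcongr
      _ = 2 * ‖B‖ * R * ‖x - y‖ := by ring
  calc dist (f - A x - B x x) (f - A y - B y y) = ‖-A (x - y) - (B x x - B y y)‖ := by
        rw [dist_eq_norm, map_sub]; congr 1; abel
    _ ≤ ‖A (x - y)‖ + ‖B x x - B y y‖ := (norm_sub_le _ _).trans_eq (by rw [norm_neg])
    _ ≤ (‖A‖ + 2 * ‖B‖ * R) * dist x y := by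
        rw [dist_eq_norm, add_mul]; exact add_le_add (A.le_opNorm _) hB

theorem norm_flow_sub_le_exp {F : E → E} {s : Set E} {K : NNReal} (hF : LipschitzOnWith K F s)
    {Ψ : ℝ → E → E} (hΨ0 : ∀ x ∈ s, Ψ 0 x = x) (hΨs : ∀ x ∈ s, ∀ t, 0 ≤ t → Ψ t x ∈ s)
    (hΨ : ∀ x ∈ s, ∀ t, 0 ≤ t → HasDerivWithinAt (fun τ => Ψ τ x) (F (Ψ t x)) (Ici 0) t)
    {v w : E} (hv : v ∈ s) (hw : w ∈ s) {t : ℝ} (ht : 0 ≤ t) :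
    ‖Ψ t v - Ψ t w‖ ≤ ‖v - w‖ * Real.exp (K * t) := by
  have hcont : ∀ x ∈ s, ContinuousOn (fun τ => Ψ τ x) (Icc 0 t) := fun x hx τ hτ =>
    (hΨ x hx τ hτ.1).continuousWithinAt.mono Icc_subset_Ici_self
  have hderiv : ∀ x ∈ s, ∀ τ ∈ Ico 0 t,
      HasDerivWithinAt (fun τ => Ψ τ x) (F (Ψ τ x)) (Ici τ) τ := fun x hx τ hτ =>
    (hΨ x hx τ hτ.1).mono (Ici_subset_Ici.mpr hτ.1)
  have := dist_le_of_trajectories_ODE_of_mem (v := fun _ => F) (s := fun _ => s)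
    (fun _ _ => hF) (hcont v hv) (hderiv v hv) (fun τ hτ => hΨs v hv τ hτ.1)
    (hcont w hw) (hderiv w hw) (fun τ hτ => hΨs w hw τ hτ.1)
    (by rw [hΨ0 v hv, hΨ0 w hw]) t ⟨ht, le_rfl⟩
  simpa only [dist_eq_norm, sub_zero] using this

end Flow

theorem sq_sup'_le_sum_sq {ι : Type*} {s : Finset ι} (hs : s.Nonempty) (f : ι → ℝ) :
    s.sup' hs f ^ 2 ≤ ∑ i ∈ s, f i ^ 2 := by
  obtain ⟨j, hj, hsup⟩ := Finset.exists_mem_eq_sup' hs f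
  rw [hsup]
  exact Finset.single_le_sum (f := fun i => f i ^ 2) (fun i _ => sq_nonneg _) hj

section Observations

variable {E F : Type*} [SeminormedAddCommGroup E] [SeminormedAddCommGroup F]

theorem mul_norm_sub_le_two_mul_sup'_norm_noise {Φ : ℕ → E → F} {k : ℕ} {u v : E} {c : ℝ}
    (hstab : ∃ i ≤ k, c * ‖v - u‖ ≤ ‖Φ i u - Φ i v‖) {y z : ℕ → F}
    (hy : ∀ i ≤ k, y i = Φ i u + z i) (hne : (Finset.range (k + 1)).Nonempty)
    (hv : ∀ i ≤ k, ‖Φ i v - y i‖ ≤ (Finset.range (k + 1)).sup' hne (fun j => ‖Φ j u - y j‖)) :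
    c * ‖v - u‖ ≤ 2 * (Finset.range (k + 1)).sup' hne (fun j => ‖z j‖) := by
  have hsup : (Finset.range (k + 1)).sup' hne (fun j => ‖Φ j u - y j‖) =
      (Finset.range (k + 1)).sup' hne (fun j => ‖z j‖) :=
    Finset.sup'_congr hne rfl fun j hj => by
      rw [hy j (Finset.mem_range_succ_iff.mp hj), sub_add_cancel_left, norm_neg]
  obtain ⟨i, hik, hi⟩ := hstab
  have hui : ‖Φ i u - y i‖ ≤ (Finset.range (k + 1)).sup' hne (fun j => ‖Φ j u - y j‖) :=
    Finset.le_sup' (fun j => ‖Φ j u - y j‖) (Finset.mem_range_succ_iff.mpr hik)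
  calc c * ‖v - u‖ ≤ ‖Φ i u - Φ i v‖ := hi
    _ ≤ ‖Φ i u - y i‖ + ‖Φ i v - y i‖ := by
        simpa only [dist_eq_norm] using dist_triangle_right (Φ i u) (Φ i v) (y i)
    _ ≤ 2 * (Finset.range (k + 1)).sup' hne (fun j => ‖z j‖) := by
        rw [← hsup]; linarith [hv i hik, hui]

theorem sq_norm_sub_le_sum_sq_norm_noise {Φ : ℕ → E → F} {k : ℕ} {u v : E} {c : ℝ} (hc : 0 < c)
    (hstab : ∃ i ≤ k, c * ‖v - u‖ ≤ ‖Φ i u - Φ i v‖) {y z : ℕ → F}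
    (hy : ∀ i ≤ k, y i = Φ i u + z i) (hne : (Finset.range (k + 1)).Nonempty)
    (hv : ∀ i ≤ k, ‖Φ i v - y i‖ ≤ (Finset.range (k + 1)).sup' hne (fun j => ‖Φ j u - y j‖)) :
    ‖v - u‖ ^ 2 ≤ 4 / c ^ 2 * ∑ j ∈ Finset.range (k + 1), ‖z j‖ ^ 2 := by
  rw [div_mul_eq_mul_div, le_div_iff₀ (by positivity)]
  calc ‖v - u‖ ^ 2 * c ^ 2 = (c * ‖v - u‖) ^ 2 := by ring
    _ ≤ (2 * (Finset.range (k + 1)).sup' hne (fun j => ‖z j‖)) ^ 2 :=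
        pow_le_pow_left₀ (by positivity)
          (mul_norm_sub_le_two_mul_sup'_norm_noise hstab hy hne hv) 2
    _ = 4 * (Finset.range (k + 1)).sup' hne (fun j => ‖z j‖) ^ 2 := by ring
    _ ≤ 4 * ∑ j ∈ Finset.range (k + 1), ‖z j‖ ^ 2 := by
        gcongr; exact sq_sup'_le_sum_sq hne _

end Observations

theorem lintegral_ofReal_le_of_ae_le_mul_sum_sq_norm {Ω F ι : Type*} [MeasurableSpace Ω]
    {μ : Measure Ω} [NormedAddCommGroup F] {Z : ι → Ω → F} {s : Finset ι}
    (hZ : ∀ i ∈ s, AEStronglyMeasurable (Z i) μ) {σ : ℝ}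
    (hmom : ∀ i ∈ s, ∫⁻ ω, ENNReal.ofReal (‖Z i ω‖ ^ 2) ∂μ ≤ ENNReal.ofReal (σ ^ 2))
    {C : ℝ} (hC : 0 ≤ C) {g : Ω → ℝ} (hg : ∀ᵐ ω ∂μ, g ω ≤ C * ∑ i ∈ s, ‖Z i ω‖ ^ 2) :
    ∫⁻ ω, ENNReal.ofReal (g ω) ∂μ ≤ ENNReal.ofReal (C * s.card * σ ^ 2) := by
  calc ∫⁻ ω, ENNReal.ofReal (g ω) ∂μ
      ≤ ∫⁻ ω, ENNReal.ofReal C * ∑ i ∈ s, ENNReal.ofReal (‖Z i ω‖ ^ 2) ∂μ := by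
        refine lintegral_mono_ae (hg.mono fun ω hω => ?_)
        rw [← ENNReal.ofReal_sum_of_nonneg (fun i _ => by positivity), ← ENNReal.ofReal_mul hC]
        exact ENNReal.ofReal_le_ofReal hω
    _ = ENNReal.ofReal C * ∑ i ∈ s, ∫⁻ ω, ENNReal.ofReal (‖Z i ω‖ ^ 2) ∂μ := by
        rw [lintegral_const_mul' _ _ ENNReal.ofReal_ne_top,
          lintegral_finsetSum' s fun i hi =>
            ((hZ i hi).norm.aemeasurable.pow_const 2).ennreal_ofReal]
    _ ≤ ENNReal.ofReal C * ∑ _i ∈ s, ENNReal.ofReal (σ ^ 2) := by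
        gcongr with i hi
        exact hmom i hi
    _ = ENNReal.ofReal (C * s.card * σ ^ 2) := by
        rw [Finset.sum_const, nsmul_eq_mul, ← ENNReal.ofReal_natCast, ← mul_assoc,
          ← ENNReal.ofReal_mul hC, ← ENNReal.ofReal_mul (by positivity)]

theorem mse_upper_bound_unbounded_noise_general {d dO : ℕ}
    (A : EuclideanSpace ℝ (Fin d) →L[ℝ] EuclideanSpace ℝ (Fin d))
    (B : EuclideanSpace ℝ (Fin d) →L[ℝ] EuclideanSpace ℝ (Fin d) →L[ℝ] EuclideanSpace ℝ (Fin d))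
    (f : EuclideanSpace ℝ (Fin d))
    (R : ℝ)
    (Ψ : ℝ → EuclideanSpace ℝ (Fin d) → EuclideanSpace ℝ (Fin d))
    (hΨ0 : ∀ x, ‖x‖ ≤ R → Ψ 0 x = x)
    (hΨR : ∀ x, ‖x‖ ≤ R → ∀ t : ℝ, 0 ≤ t → ‖Ψ t x‖ ≤ R)
    (hΨode : ∀ x, ‖x‖ ≤ R → ∀ t : ℝ, 0 ≤ t →
      HasDerivWithinAt (fun s => Ψ s x)
        (f - A (Ψ t x) - B (Ψ t x) (Ψ t x)) (Ici 0) t)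
    (h : ℝ) (hh : 0 < h)
    (H : EuclideanSpace ℝ (Fin d) →L[ℝ] EuclideanSpace ℝ (Fin dO))
    (k : ℕ) (u : EuclideanSpace ℝ (Fin d)) (hu : ‖u‖ ≤ R)
    -- Assumption 7:
    (c : ℝ) (hc : 0 < c)
    (hass : ∀ v : EuclideanSpace ℝ (Fin d), ‖v‖ ≤ R →
      ∃ i ≤ k, c * ‖v - u‖ ≤ ‖H (Ψ (i * h) u) - H (Ψ (i * h) v)‖)
    -- noise with finite second moment, and the observations
    (Ω : Type*) [MeasurableSpace Ω] (μ : Measure Ω)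
    (Z : ℕ → Ω → EuclideanSpace ℝ (Fin dO)) (hZmeas : ∀ i, Measurable (Z i))
    (σZ : ℝ)
    (hZmom : ∀ i ≤ k, ∫⁻ ω, ENNReal.ofReal (‖Z i ω‖ ^ 2) ∂μ ≤ ENNReal.ofReal (σZ ^ 2))
    (Y : ℕ → Ω → EuclideanSpace ℝ (Fin dO))
    (hY : ∀ i ≤ k, ∀ ω, Y i ω = H (Ψ (i * h) u) + Z i ω)
    -- a (near-)minimizer of the max observation error over `B_R`
    (U : Ω → EuclideanSpace ℝ (Fin d)) (hUR : ∀ ω, ‖U ω‖ ≤ R)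
    (hUmin : ∀ᵐ ω ∂μ, ∀ i ≤ k,
      ‖H (Ψ (i * h) (U ω)) - Y i ω‖ ≤
        (Finset.range (k + 1)).sup' ⟨0, Finset.mem_range.mpr (Nat.succ_pos k)⟩
          (fun j => ‖H (Ψ (j * h) u) - Y j ω‖)) :
    (∫⁻ ω, ENNReal.ofReal (‖U ω - u‖ ^ 2) ∂μ ≤
      ENNReal.ofReal (4 * (k + 1) / c ^ 2 * σZ ^ 2)) ∧
    (∫⁻ ω, ENNReal.ofReal (‖Ψ (k * h) (U ω) - Ψ (k * h) u‖ ^ 2) ∂μ ≤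
      ENNReal.ofReal (4 * (k + 1) / c ^ 2 *
        Real.exp (2 * (‖A‖ + 2 * ‖B‖ * R) * (k * h)) * σZ ^ 2)) := by
  set G := ‖A‖ + 2 * ‖B‖ * R
  have hG : 0 ≤ G := by have := (norm_nonneg u).trans hu; positivity
  have hU : ∀ᵐ ω ∂μ, ‖U ω - u‖ ^ 2 ≤ 4 / c ^ 2 * ∑ j ∈ Finset.range (k + 1), ‖Z j ω‖ ^ 2 :=
    hUmin.mono fun ω hω => sq_norm_sub_le_sum_sq_norm_noise (Φ := fun i x => H (Ψ (i * h) x))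
      hc (hass (U ω) (hUR ω)) (fun i hi => hY i hi ω) _ hω
  have hflow (ω : Ω) : ‖Ψ (k * h) (U ω) - Ψ (k * h) u‖ ^ 2 ≤
      Real.exp (2 * G * (k * h)) * ‖U ω - u‖ ^ 2 := by
    have hball (x : EuclideanSpace ℝ (Fin d)) : x ∈ Metric.closedBall 0 R ↔ ‖x‖ ≤ R :=
      mem_closedBall_zero_iff
    have := norm_flow_sub_le_exp (lipschitzOnWith_quadratic_field A B f R)
      (fun x hx => hΨ0 x ((hball x).1 hx))
      (fun x hx t ht => (hball _).2 (hΨR x ((hball x).1 hx) t ht))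
      (fun x hx => hΨode x ((hball x).1 hx)) ((hball _).2 (hUR ω)) ((hball _).2 hu)
      (t := k * h) (by positivity)
    rw [Real.coe_toNNReal _ hG] at this
    calc ‖Ψ (k * h) (U ω) - Ψ (k * h) u‖ ^ 2 ≤ (‖U ω - u‖ * Real.exp (G * (k * h))) ^ 2 :=
          pow_le_pow_left₀ (norm_nonneg _) this 2
      _ = Real.exp (2 * G * (k * h)) * ‖U ω - u‖ ^ 2 := by
          rw [mul_pow, ← Real.exp_nat_mul]; push_cast; ring_nf
  have hZ i (hi : i ∈ Finset.range (k + 1)) := hZmom i (Finset.mem_range_succ_iff.mp hi)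
  have hZae i (_ : i ∈ Finset.range (k + 1)) := (hZmeas i).aestronglyMeasurable (μ := μ)
  constructor
  · calc _ ≤ ENNReal.ofReal (4 / c ^ 2 * (Finset.range (k + 1)).card * σZ ^ 2) :=
          lintegral_ofReal_le_of_ae_le_mul_sum_sq_norm hZae hZ (by positivity) hU
      _ = _ := by rw [Finset.card_range]; push_cast; ring_nf
  · have hΨU : ∀ᵐ ω ∂μ, ‖Ψ (k * h) (U ω) - Ψ (k * h) u‖ ^ 2 ≤
        Real.exp (2 * G * (k * h)) * (4 / c ^ 2) * ∑ j ∈ Finset.range (k + 1), ‖Z j ω‖ ^ 2 :=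
      hU.mono fun ω hω => (hflow ω).trans <|
        (mul_le_mul_of_nonneg_left hω (Real.exp_pos _).le).trans_eq (by ring)
    calc _ ≤ ENNReal.ofReal (Real.exp (2 * G * (k * h)) * (4 / c ^ 2) *
            (Finset.range (k + 1)).card * σZ ^ 2) :=
          lintegral_ofReal_le_of_ae_le_mul_sum_sq_norm hZae hZ (by positivity) hΨU
      _ = _ := by rw [Finset.card_range]; push_cast; ring_nf

/-- upper bound for unbounded observation errors.  Under
Assumption 7, any (measurable selection of a) minimizer `U` over `B_R` of
`v ↦ max_{0≤i≤k} ‖Φ_{t_i}(v) - Y_i‖` satisfies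
`E‖U - u‖² ≤ (4(k+1)/c²)·σ_Z²` and
`E‖Ψ_{t_k}(U) - Ψ_{t_k}(u)‖² ≤ (4(k+1)/c²)·exp(2 G t_k)·σ_Z²`. -/
theorem mse_upper_bound_unbounded_noise {d dO : ℕ}
    (A : EuclideanSpace ℝ (Fin d) →L[ℝ] EuclideanSpace ℝ (Fin d))
    (B : EuclideanSpace ℝ (Fin d) →L[ℝ] EuclideanSpace ℝ (Fin d) →L[ℝ] EuclideanSpace ℝ (Fin d))
    (f : EuclideanSpace ℝ (Fin d))
    (R δ : ℝ) (hR : 0 < R) (hδ : 0 < δ)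
    (htrap : ∀ x : EuclideanSpace ℝ (Fin d),
      ‖x‖ ∈ Icc R (R + δ) → (inner ℝ (f - A x - B x x) x : ℝ) ≤ 0)
    (Ψ : ℝ → EuclideanSpace ℝ (Fin d) → EuclideanSpace ℝ (Fin d))
    (hΨ0 : ∀ x, ‖x‖ ≤ R → Ψ 0 x = x)
    (hΨR : ∀ x, ‖x‖ ≤ R → ∀ t : ℝ, 0 ≤ t → ‖Ψ t x‖ ≤ R)
    (hΨode : ∀ x, ‖x‖ ≤ R → ∀ t : ℝ, 0 ≤ t →
      HasDerivWithinAt (fun s => Ψ s x)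
        (f - A (Ψ t x) - B (Ψ t x) (Ψ t x)) (Ici 0) t)
    (h : ℝ) (hh : 0 < h)
    (H : EuclideanSpace ℝ (Fin d) →L[ℝ] EuclideanSpace ℝ (Fin dO))
    (k : ℕ) (u : EuclideanSpace ℝ (Fin d)) (hu : ‖u‖ ≤ R)
    -- Assumption 7:
    (c : ℝ) (hc : 0 < c)
    (hass : ∀ v : EuclideanSpace ℝ (Fin d), ‖v‖ ≤ R →
      ∃ i ≤ k, c * ‖v - u‖ ≤ ‖H (Ψ (i * h) u) - H (Ψ (i * h) v)‖)
    -- noise with finite second moment, and the observations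
    (Ω : Type*) [MeasurableSpace Ω] (μ : Measure Ω) [IsProbabilityMeasure μ]
    (Z : ℕ → Ω → EuclideanSpace ℝ (Fin dO)) (hZmeas : ∀ i, Measurable (Z i))
    (σZ : ℝ) (hσZ : 0 ≤ σZ)
    (hZmom : ∀ i ≤ k, ∫⁻ ω, ENNReal.ofReal (‖Z i ω‖ ^ 2) ∂μ ≤ ENNReal.ofReal (σZ ^ 2))
    (Y : ℕ → Ω → EuclideanSpace ℝ (Fin dO))
    (hY : ∀ i ≤ k, ∀ ω, Y i ω = H (Ψ (i * h) u) + Z i ω)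
    -- a (near-)minimizer of the max observation error over `B_R`
    (U : Ω → EuclideanSpace ℝ (Fin d)) (hUR : ∀ ω, ‖U ω‖ ≤ R)
    (hUmin : ∀ᵐ ω ∂μ, ∀ i ≤ k,
      ‖H (Ψ (i * h) (U ω)) - Y i ω‖ ≤
        (Finset.range (k + 1)).sup' ⟨0, Finset.mem_range.mpr (Nat.succ_pos k)⟩
          (fun j => ‖H (Ψ (j * h) u) - Y j ω‖)) :
    (∫⁻ ω, ENNReal.ofReal (‖U ω - u‖ ^ 2) ∂μ ≤
      ENNReal.ofReal (4 * (k + 1) / c ^ 2 * σZ ^ 2)) ∧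
    (∫⁻ ω, ENNReal.ofReal (‖Ψ (k * h) (U ω) - Ψ (k * h) u‖ ^ 2) ∂μ ≤
      ENNReal.ofReal (4 * (k + 1) / c ^ 2 *
        Real.exp (2 * (‖A‖ + 2 * ‖B‖ * R) * (k * h)) * σZ ^ 2)) :=
  mse_upper_bound_unbounded_noise_general A B f R Ψ hΨ0 hΨR hΨode h hh H k u hu c hc hass Ω μ Z
    hZmeas σZ hZmom Y hY U hUR hUmin
end
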